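/- arXiv:1402.4115 — 11 statements merged into one kernel-verified Lean document; each statement's English description precedes it below -/
import Mathlib

section
/- Let n ≥ 1, let K, L be real skew-symmetric n×n matrices, S a real symmetric n×n matrix, let Δx, Δt > 0 and X, Ω ∈ ℝ with cos(XΔx/2) + cos(ΩΔt/2) ≠ 0. Define the plane-wave values z₀¹ = e^{−iΩΔt/2} c, z₀⁻¹ = e^{iΩΔt/2} c, z₁⁰ = e^{iXΔx/2} c, z₋₁⁰ = e^{−iXΔx/2} c, and z₀⁰ = (z₀¹ + z₀⁻¹ + z₁⁰ + z₋₁⁰)/4 for c ∈ ℂⁿ. Then there exists a nonzero c ∈ ℂⁿ such that K (z₀¹ − z₀⁻¹)/Δt + L (z₁⁰ − z₋₁⁰)/Δx = S z₀⁰, if and only if det(−i h₂(XΔx, ΩΔt) K + i h₁(XΔx, ΩΔt) L − S) = 0, where h₁(x,y) = 4 sin(x/2) / (Δx (cos(x/2) + cos(y/2))) and h₂(x,y) = 4 sin(y/2) / (Δt (cos(x/2) + cos(y/2))). -/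
open Matrix Complex

noncomputable def hone (Δx x y : ℝ) : ℝ :=
  4 * Real.sin (x / 2) / (Δx * (Real.cos (x / 2) + Real.cos (y / 2)))

noncomputable def htwo (Δt x y : ℝ) : ℝ :=
  4 * Real.sin (y / 2) / (Δt * (Real.cos (x / 2) + Real.cos (y / 2)))

lemma scalar1_dd (dt ca cb sb : ℂ) (hdt : dt ≠ 0) (hc : ca + cb ≠ 0) :
    1/dt * ((cb - sb*I) - (cb + sb*I)) = (ca+cb)/2 * (-(I * (4*sb/(dt*(ca+cb))))) := by
  field_simp
  ring

lemma scalar2_dd (dx ca cb sa : ℂ) (hdx : dx ≠ 0) (hc : ca + cb ≠ 0) :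
    1/dx * ((ca + sa*I) - (ca - sa*I)) = (ca+cb)/2 * (I * (4*sa/(dx*(ca+cb)))) := by
  field_simp
  ring

/-- Dispersion relation of the simple diamond scheme: a nonzero discrete plane wave
solves the scheme on one diamond iff `det(−i h₂ K + i h₁ L − S) = 0`. -/
theorem dispersion_relation_simple_diamond (n : ℕ) (hn : 1 ≤ n)
    (K L S : Matrix (Fin n) (Fin n) ℝ)
    (hK : Kᵀ = -K) (hL : Lᵀ = -L) (hS : Sᵀ = S)
    (Δx Δt : ℝ) (hΔx : 0 < Δx) (hΔt : 0 < Δt)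
    (X Ω : ℝ)
    (hcos : Real.cos (X * Δx / 2) + Real.cos (Ω * Δt / 2) ≠ 0) :
    (∃ c : Fin n → ℂ, c ≠ 0 ∧
      (1 / (Δt : ℂ)) • (K.map ((↑) : ℝ → ℂ)).mulVec
          (Complex.exp (-(Complex.I) * ((Ω * Δt / 2 : ℝ) : ℂ)) • c
            - Complex.exp (Complex.I * ((Ω * Δt / 2 : ℝ) : ℂ)) • c)
        + (1 / (Δx : ℂ)) • (L.map ((↑) : ℝ → ℂ)).mulVec
          (Complex.exp (Complex.I * ((X * Δx / 2 : ℝ) : ℂ)) • c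
            - Complex.exp (-(Complex.I) * ((X * Δx / 2 : ℝ) : ℂ)) • c)
        = (S.map ((↑) : ℝ → ℂ)).mulVec
          ((1 / 4 : ℂ) •
            (Complex.exp (-(Complex.I) * ((Ω * Δt / 2 : ℝ) : ℂ)) • c
              + Complex.exp (Complex.I * ((Ω * Δt / 2 : ℝ) : ℂ)) • c
              + Complex.exp (Complex.I * ((X * Δx / 2 : ℝ) : ℂ)) • c
              + Complex.exp (-(Complex.I) * ((X * Δx / 2 : ℝ) : ℂ)) • c)))
    ↔ ((-(Complex.I * ((htwo Δt (X * Δx) (Ω * Δt) : ℝ) : ℂ))) • K.map ((↑) : ℝ → ℂ)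
        + (Complex.I * ((hone Δx (X * Δx) (Ω * Δt) : ℝ) : ℂ)) • L.map ((↑) : ℝ → ℂ)
        - S.map ((↑) : ℝ → ℂ)).det = 0 := by
  have hΔx' : (Δx : ℂ) ≠ 0 := Complex.ofReal_ne_zero.mpr hΔx.ne'
  have hΔt' : (Δt : ℂ) ≠ 0 := Complex.ofReal_ne_zero.mpr hΔt.ne'
  simp only [hone, htwo]
  set a : ℝ := X * Δx / 2 with ha
  set b : ℝ := Ω * Δt / 2 with hb
  set K' := K.map ((↑) : ℝ → ℂ) with hK'
  set L' := L.map ((↑) : ℝ → ℂ) with hL'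
  set S' := S.map ((↑) : ℝ → ℂ) with hS'
  set M : Matrix (Fin n) (Fin n) ℂ :=
    (-(Complex.I * ((4 * Real.sin b / (Δt * (Real.cos a + Real.cos b)) : ℝ) : ℂ))) • K'
      + (Complex.I * ((4 * Real.sin a / (Δx * (Real.cos a + Real.cos b)) : ℝ) : ℂ)) • L' - S'
    with hM
  have hc' : ((Real.cos a : ℂ) + (Real.cos b : ℂ)) ≠ 0 := by
    rw [← Complex.ofReal_add]; exact Complex.ofReal_ne_zero.mpr hcos
  have hγ : (((Real.cos a : ℂ) + (Real.cos b : ℂ)) / 2) ≠ 0 := by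
    simpa using hc'
  have e1 : Complex.exp (Complex.I * (b : ℂ)) = (Real.cos b : ℂ) + (Real.sin b : ℂ) * Complex.I := by
    rw [mul_comm, Complex.exp_mul_I, Complex.ofReal_cos, Complex.ofReal_sin]
  have e2 : Complex.exp (-(Complex.I) * (b : ℂ)) = (Real.cos b : ℂ) - (Real.sin b : ℂ) * Complex.I := by
    have h : -(Complex.I) * (b : ℂ) = ((-b : ℝ) : ℂ) * Complex.I := by push_cast; ring
    rw [h, Complex.exp_mul_I, Complex.ofReal_neg, Complex.cos_neg, Complex.sin_neg,
      ← Complex.ofReal_cos, ← Complex.ofReal_sin]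
    ring
  have e3 : Complex.exp (Complex.I * (a : ℂ)) = (Real.cos a : ℂ) + (Real.sin a : ℂ) * Complex.I := by
    rw [mul_comm, Complex.exp_mul_I, Complex.ofReal_cos, Complex.ofReal_sin]
  have e4 : Complex.exp (-(Complex.I) * (a : ℂ)) = (Real.cos a : ℂ) - (Real.sin a : ℂ) * Complex.I := by
    have h : -(Complex.I) * (a : ℂ) = ((-a : ℝ) : ℂ) * Complex.I := by push_cast; ring
    rw [h, Complex.exp_mul_I, Complex.ofReal_neg, Complex.cos_neg, Complex.sin_neg,
      ← Complex.ofReal_cos, ← Complex.ofReal_sin]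
    ring
  rw [← Matrix.exists_mulVec_eq_zero_iff (M := M)]
  refine exists_congr fun c => and_congr_right fun _ => ?_
  have expand : M.mulVec c =
      (-(Complex.I * ((4 * Real.sin b / (Δt * (Real.cos a + Real.cos b)) : ℝ) : ℂ))) • K'.mulVec c
        + (Complex.I * ((4 * Real.sin a / (Δx * (Real.cos a + Real.cos b)) : ℝ) : ℂ)) • L'.mulVec c
        - S'.mulVec c := by
    rw [hM, Matrix.sub_mulVec, Matrix.add_mulVec, Matrix.smul_mulVec,
      Matrix.smul_mulVec]
  rw [← sub_smul, ← sub_smul, Matrix.mulVec_smul, Matrix.mulVec_smul, ← add_smul, ← add_smul,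
    ← add_smul, Matrix.mulVec_smul, Matrix.mulVec_smul, smul_smul, smul_smul, smul_smul]
  have hα : (1 / (Δt : ℂ)) * (Complex.exp (-(Complex.I) * (b : ℂ)) - Complex.exp (Complex.I * (b : ℂ)))
      = (((Real.cos a : ℂ) + (Real.cos b : ℂ)) / 2)
        * (-(Complex.I * ((4 * Real.sin b / (Δt * (Real.cos a + Real.cos b)) : ℝ) : ℂ))) := by
    rw [e1, e2]
    simp only [Complex.ofReal_div, Complex.ofReal_mul, Complex.ofReal_add, Complex.ofReal_ofNat]
    exact scalar1_dd _ _ _ _ hΔt' hc'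
  have hβ : (1 / (Δx : ℂ)) * (Complex.exp (Complex.I * (a : ℂ)) - Complex.exp (-(Complex.I) * (a : ℂ)))
      = (((Real.cos a : ℂ) + (Real.cos b : ℂ)) / 2)
        * (Complex.I * ((4 * Real.sin a / (Δx * (Real.cos a + Real.cos b)) : ℝ) : ℂ)) := by
    rw [e3, e4]
    simp only [Complex.ofReal_div, Complex.ofReal_mul, Complex.ofReal_add, Complex.ofReal_ofNat]
    exact scalar2_dd _ _ _ _ hΔx' hc'
  have hγ4 : (1 / 4 : ℂ) * (Complex.exp (-(Complex.I) * (b : ℂ)) + Complex.exp (Complex.I * (b : ℂ))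
      + Complex.exp (Complex.I * (a : ℂ)) + Complex.exp (-(Complex.I) * (a : ℂ)))
      = (((Real.cos a : ℂ) + (Real.cos b : ℂ)) / 2) := by
    rw [e1, e2, e3, e4]; ring
  rw [hα, hβ, hγ4, ← sub_eq_zero, ← smul_smul, ← smul_smul, ← smul_add, ← smul_sub,
    ← expand, smul_eq_zero]
  exact or_iff_right hγ
end

section
/- Let n ≥ 1, let K̃, L̃ be real n×n matrices, S a real symmetric n×n matrix, and let X̃, Ω̃ ∈ (−π, π). Then there exists a nonzero c ∈ ℂⁿ such that (K̃/2)(e^{−iΩ̃} + e^{i(X̃−Ω̃)} − 1 − e^{iX̃}) c + (L̃/2)(e^{iX̃} + e^{i(X̃−Ω̃)} − 1 − e^{−iΩ̃}) c = (S/4)(1 + e^{iX̃} + e^{−iΩ̃} + e^{i(X̃−Ω̃)}) c, if and only if det(−2i tan(Ω̃/2) K̃ + 2i tan(X̃/2) L̃ − S) = 0. -/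
open Matrix Complex Real

lemma half_angle_aux (θ : ℝ) (hθ : θ ∈ Set.Ioo (-π) π) :
    Complex.exp ((θ : ℂ) * Complex.I) + 1 ≠ 0 ∧
    Complex.exp ((θ : ℂ) * Complex.I) - 1 =
      Complex.I * ((Real.tan (θ / 2) : ℝ) : ℂ) * (Complex.exp ((θ : ℂ) * Complex.I) + 1) := by
  obtain ⟨h1, h2⟩ := hθ
  have hc : 0 < Real.cos (θ / 2) :=
    Real.cos_pos_of_mem_Ioo ⟨by linarith, by linarith⟩
  set c : ℝ := Real.cos (θ / 2) with hcdef
  set s : ℝ := Real.sin (θ / 2) with hsdef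
  have hpy' : c ^ 2 + s ^ 2 = 1 := Real.cos_sq_add_sin_sq (θ / 2)
  have hpy : (c : ℂ) ^ 2 + (s : ℂ) ^ 2 = 1 := by exact_mod_cast hpy'
  have he : Complex.exp ((θ : ℂ) * Complex.I) = ((c : ℂ) + (s : ℂ) * Complex.I) ^ 2 := by
    have h : (θ : ℂ) * Complex.I = ((θ / 2 : ℝ) : ℂ) * Complex.I + ((θ / 2 : ℝ) : ℂ) * Complex.I := by
      push_cast; ring
    rw [h, Complex.exp_add, Complex.exp_mul_I, ← Complex.ofReal_cos, ← Complex.ofReal_sin, sq]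
  have hcne : (c : ℂ) ≠ 0 := by exact_mod_cast hc.ne'
  have htan : ((Real.tan (θ / 2) : ℝ) : ℂ) = (s : ℂ) / (c : ℂ) := by
    rw [Real.tan_eq_sin_div_cos, Complex.ofReal_div]
  have hef : ((c : ℂ) + (s : ℂ) * Complex.I) * ((c : ℂ) - (s : ℂ) * Complex.I) = 1 := by
    linear_combination hpy - (s : ℂ) ^ 2 * Complex.I_sq
  have h1' : ((c : ℂ) + (s : ℂ) * Complex.I) ^ 2 - 1
      = ((c : ℂ) + (s : ℂ) * Complex.I) * (2 * s * Complex.I) := by linear_combination hef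
  have h2' : ((c : ℂ) + (s : ℂ) * Complex.I) ^ 2 + 1
      = ((c : ℂ) + (s : ℂ) * Complex.I) * (2 * c) := by linear_combination (-1 : ℂ) * hef
  have hene : ((c : ℂ) + (s : ℂ) * Complex.I) ≠ 0 := left_ne_zero_of_mul_eq_one hef
  constructor
  · rw [he, h2']
    exact mul_ne_zero hene (by simpa using hcne)
  · rw [he, htan, h1', h2']
    field_simp

/-- Dispersion relation of the `r = 1` diamond scheme in transformed coordinates:
a nonzero discrete plane wave solves the scheme on one unit square iff
`det(−2i tan(Ω̃/2) K̃ + 2i tan(X̃/2) L̃ − S) = 0`. -/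
theorem dispersion_relation_r1_diamond (n : ℕ) (hn : 1 ≤ n)
    (Kt Lt S : Matrix (Fin n) (Fin n) ℝ) (hS : Sᵀ = S)
    (Xt Ωt : ℝ) (hXt : Xt ∈ Set.Ioo (-π) π) (hΩt : Ωt ∈ Set.Ioo (-π) π) :
    (∃ c : Fin n → ℂ, c ≠ 0 ∧
      ((Complex.exp (-(Complex.I) * (Ωt : ℂ)) + Complex.exp (Complex.I * ((Xt : ℂ) - (Ωt : ℂ)))
          - 1 - Complex.exp (Complex.I * (Xt : ℂ))) / 2) • (Kt.map ((↑) : ℝ → ℂ)).mulVec c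
        + ((Complex.exp (Complex.I * (Xt : ℂ)) + Complex.exp (Complex.I * ((Xt : ℂ) - (Ωt : ℂ)))
          - 1 - Complex.exp (-(Complex.I) * (Ωt : ℂ))) / 2) • (Lt.map ((↑) : ℝ → ℂ)).mulVec c
        = ((1 + Complex.exp (Complex.I * (Xt : ℂ)) + Complex.exp (-(Complex.I) * (Ωt : ℂ))
          + Complex.exp (Complex.I * ((Xt : ℂ) - (Ωt : ℂ)))) / 4) • (S.map ((↑) : ℝ → ℂ)).mulVec c)
    ↔ ((-(2 * Complex.I * ((Real.tan (Ωt / 2) : ℝ) : ℂ))) • Kt.map ((↑) : ℝ → ℂ)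
        + (2 * Complex.I * ((Real.tan (Xt / 2) : ℝ) : ℂ)) • Lt.map ((↑) : ℝ → ℂ)
        - S.map ((↑) : ℝ → ℂ)).det = 0 := by
  obtain ⟨haX, htX⟩ := half_angle_aux Xt hXt
  have hΩ' : -Ωt ∈ Set.Ioo (-π) π := ⟨by linarith [hΩt.2], by linarith [hΩt.1]⟩
  obtain ⟨hbΩ, htΩ⟩ := half_angle_aux (-Ωt) hΩ'
  set a : ℂ := Complex.exp ((Xt : ℂ) * Complex.I) with ha
  set b : ℂ := Complex.exp (((-Ωt : ℝ) : ℂ) * Complex.I) with hb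
  set tX : ℂ := ((Real.tan (Xt / 2) : ℝ) : ℂ) with htXdef
  set tΩ : ℂ := ((Real.tan (Ωt / 2) : ℝ) : ℂ) with htΩdef
  have htΩ' : b - 1 = -(Complex.I * tΩ) * (b + 1) := by
    have h : Real.tan (-Ωt / 2) = -Real.tan (Ωt / 2) := by rw [neg_div, Real.tan_neg]
    rw [h, Complex.ofReal_neg] at htΩ
    rw [htΩdef]
    linear_combination htΩ
  -- rewrite the exponentials in the goal in terms of a and b
  have e1 : Complex.exp (-(Complex.I) * (Ωt : ℂ)) = b := by
    rw [hb]; congr 1; push_cast; ring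
  have e2 : Complex.exp (Complex.I * (Xt : ℂ)) = a := by
    rw [ha]; congr 1; ring
  have e3 : Complex.exp (Complex.I * ((Xt : ℂ) - (Ωt : ℂ))) = a * b := by
    rw [ha, hb, ← Complex.exp_add]; congr 1; push_cast; ring
  rw [e1, e2, e3]
  set Kc := Kt.map ((↑) : ℝ → ℂ)
  set Lc := Lt.map ((↑) : ℝ → ℂ)
  set Sc := S.map ((↑) : ℝ → ℂ)
  set lam : ℂ := (1 + a) * (1 + b) / 4 with hlamdef
  have hlam : lam ≠ 0 := by
    rw [hlamdef]
    apply div_ne_zero _ (by norm_num)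
    exact mul_ne_zero (by rw [add_comm]; exact haX) (by rw [add_comm]; exact hbΩ)
  have hcK : (b + a * b - 1 - a) / 2 = lam * (-(2 * Complex.I * tΩ)) := by
    rw [hlamdef]; linear_combination ((1 + a) / 2) * htΩ'
  have hcL : (a + a * b - 1 - b) / 2 = lam * (2 * Complex.I * tX) := by
    rw [hlamdef]; linear_combination ((1 + b) / 2) * htX
  have hcS : (1 + a + b + a * b) / 4 = lam := by rw [hlamdef]; ring
  set N := (-(2 * Complex.I * tΩ)) • Kc + (2 * Complex.I * tX) • Lc - Sc with hN
  have hM : ((b + a * b - 1 - a) / 2) • Kc + ((a + a * b - 1 - b) / 2) • Lc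
      - ((1 + a + b + a * b) / 4) • Sc = lam • N := by
    rw [hcK, hcL, hcS, hN, smul_sub, smul_add, smul_smul, smul_smul]
  have key : ∀ c : Fin n → ℂ,
      (((b + a * b - 1 - a) / 2) • Kc.mulVec c + ((a + a * b - 1 - b) / 2) • Lc.mulVec c
        = ((1 + a + b + a * b) / 4) • Sc.mulVec c) ↔ (lam • N).mulVec c = 0 := by
    intro c
    rw [← hM, Matrix.sub_mulVec, Matrix.add_mulVec, Matrix.smul_mulVec,
      Matrix.smul_mulVec, Matrix.smul_mulVec, sub_eq_zero]
  constructor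
  · rintro ⟨c, hc0, hc⟩
    have hdet : (lam • N).det = 0 :=
      Matrix.exists_mulVec_eq_zero_iff.mp ⟨c, hc0, (key c).mp hc⟩
    rw [Matrix.det_smul] at hdet
    rcases mul_eq_zero.mp hdet with h | h
    · exact absurd h (pow_ne_zero _ hlam)
    · exact h
  · intro hdet
    have : (lam • N).det = 0 := by rw [Matrix.det_smul, hdet, mul_zero]
    obtain ⟨c, hc0, hc⟩ := Matrix.exists_mulVec_eq_zero_iff.mpr this
    exact ⟨c, hc0, (key c).mpr hc⟩
end

section
/- Let n ≥ 1, let K, L, S be real n×n matrices, let Δx, Δt > 0, and let X, Ω ∈ ℝ. Set K̃ = (1/Δt)K − (1/Δx)L, L̃ = (1/Δt)K + (1/Δx)L, X̃ = (Δx·X − Ω·Δt)/2 and Ω̃ = (Δx·X + Ω·Δt)/2, and assume cos(X̃/2) ≠ 0 and cos(Ω̃/2) ≠ 0. Then det(−2i tan(Ω̃/2) K̃ + 2i tan(X̃/2) L̃ − S) = det(−i h₂(XΔx, ΩΔt) K + i h₁(XΔx, ΩΔt) L − S), where h₁(x,y) = 4 sin(x/2) / (Δx (cos(x/2) + cos(y/2)))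 and h₂(x,y) = 4 sin(y/2) / (Δt (cos(x/2) + cos(y/2))). (Note cos(XΔx/2) + cos(ΩΔt/2) = 2 cos(Ω̃/2) cos(X̃/2) ≠ 0, so h is defined.) -/
open Matrix Complex Real

lemma tan_sum_aux (a b d : ℝ) (ha : Real.cos a ≠ 0) (hb : Real.cos b ≠ 0)
    (hd : d ≠ 0) :
    4 * Real.sin (a + b) / (d * (Real.cos (a + b) + Real.cos (b - a)))
      = 2 * (Real.tan a + Real.tan b) / d := by
  have hcc : Real.cos (a + b) + Real.cos (b - a) = 2 * Real.cos a * Real.cos b := by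
    rw [Real.cos_add, Real.cos_sub]; ring
  rw [hcc, Real.tan_eq_sin_div_cos, Real.tan_eq_sin_div_cos, Real.sin_add]
  field_simp
  ring

lemma tan_diff_aux (a b d : ℝ) (ha : Real.cos a ≠ 0) (hb : Real.cos b ≠ 0)
    (hd : d ≠ 0) :
    4 * Real.sin (b - a) / (d * (Real.cos (a + b) + Real.cos (b - a)))
      = 2 * (Real.tan b - Real.tan a) / d := by
  have hcc : Real.cos (a + b) + Real.cos (b - a) = 2 * Real.cos a * Real.cos b := by
    rw [Real.cos_add, Real.cos_sub]; ring
  rw [hcc, Real.tan_eq_sin_div_cos, Real.tan_eq_sin_div_cos, Real.sin_sub]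
  field_simp
  ring

/-- The simple diamond scheme and the `r = 1` diamond scheme have identical
dispersion relations: the two dispersion determinants coincide. -/
theorem dispersion_determinants_equal (n : ℕ) (hn : 1 ≤ n)
    (K L S : Matrix (Fin n) (Fin n) ℝ)
    (Δx Δt : ℝ) (hΔx : 0 < Δx) (hΔt : 0 < Δt)
    (X Ω : ℝ)
    (Kt Lt : Matrix (Fin n) (Fin n) ℝ)
    (hKt : Kt = (1 / Δt) • K - (1 / Δx) • L)
    (hLt : Lt = (1 / Δt) • K + (1 / Δx) • L)
    (Xt Ωt : ℝ)
    (hXt : Xt = (Δx * X - Ω * Δt) / 2)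
    (hΩt : Ωt = (Δx * X + Ω * Δt) / 2)
    (hc1 : Real.cos (Xt / 2) ≠ 0) (hc2 : Real.cos (Ωt / 2) ≠ 0) :
    ((-(2 * Complex.I * ((Real.tan (Ωt / 2) : ℝ) : ℂ))) • Kt.map ((↑) : ℝ → ℂ)
        + (2 * Complex.I * ((Real.tan (Xt / 2) : ℝ) : ℂ)) • Lt.map ((↑) : ℝ → ℂ)
        - S.map ((↑) : ℝ → ℂ)).det
      = ((-(Complex.I * ((htwo Δt (X * Δx) (Ω * Δt) : ℝ) : ℂ))) • K.map ((↑) : ℝ → ℂ)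
        + (Complex.I * ((hone Δx (X * Δx) (Ω * Δt) : ℝ) : ℂ)) • L.map ((↑) : ℝ → ℂ)
        - S.map ((↑) : ℝ → ℂ)).det := by
  have hΔx' : Δx ≠ 0 := ne_of_gt hΔx
  have hΔt' : Δt ≠ 0 := ne_of_gt hΔt
  have hx2 : (X * Δx) / 2 = Xt / 2 + Ωt / 2 := by subst hXt hΩt; ring
  have hy2 : (Ω * Δt) / 2 = Ωt / 2 - Xt / 2 := by subst hXt hΩt; ring
  have h1eq : hone Δx (X * Δx) (Ω * Δt)
      = 2 * (Real.tan (Xt / 2) + Real.tan (Ωt / 2)) / Δx := by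
    unfold hone
    rw [hx2, hy2]
    exact tan_sum_aux _ _ _ hc1 hc2 hΔx'
  have h2eq : htwo Δt (X * Δx) (Ω * Δt)
      = 2 * (Real.tan (Ωt / 2) - Real.tan (Xt / 2)) / Δt := by
    unfold htwo
    rw [hx2, hy2]
    exact tan_diff_aux _ _ _ hc1 hc2 hΔt'
  have hM : ((-(2 * Complex.I * ((Real.tan (Ωt / 2) : ℝ) : ℂ))) • Kt.map ((↑) : ℝ → ℂ)
        + (2 * Complex.I * ((Real.tan (Xt / 2) : ℝ) : ℂ)) • Lt.map ((↑) : ℝ → ℂ)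
        - S.map ((↑) : ℝ → ℂ))
      = ((-(Complex.I * ((htwo Δt (X * Δx) (Ω * Δt) : ℝ) : ℂ))) • K.map ((↑) : ℝ → ℂ)
        + (Complex.I * ((hone Δx (X * Δx) (Ω * Δt) : ℝ) : ℂ)) • L.map ((↑) : ℝ → ℂ)
        - S.map ((↑) : ℝ → ℂ)) := by
    ext i j
    subst hKt hLt
    simp only [Matrix.sub_apply, Matrix.add_apply, Matrix.smul_apply, Matrix.map_apply,
      Matrix.sub_apply, Matrix.add_apply, Matrix.smul_apply, smul_eq_mul,
      Complex.ofReal_sub, Complex.ofReal_add, Complex.ofReal_mul, Complex.ofReal_div,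
      Complex.ofReal_one, h1eq, h2eq, Complex.ofReal_ofNat]
    have hΔxC : (Δx : ℂ) ≠ 0 := Complex.ofReal_ne_zero.mpr hΔx'
    have hΔtC : (Δt : ℂ) ≠ 0 := Complex.ofReal_ne_zero.mpr hΔt'
    field_simp
    ring
  rw [hM]
end

section
/- Let Δx, Δt > 0, let U = (−π, π) × (−π, π) ⊂ ℝ², and define h : U → ℝ² by h(x,y) = (h₁(x,y), h₂(x,y)) with h₁(x,y) = 4 sin(x/2) / (Δx (cos(x/2) + cos(y/2))) and h₂(x,y) = 4 sin(y/2) / (Δt (cos(x/2) + cos(y/2))). Then h is injective on U, h is differentiable at every point of U, and the determinant of its Jacobian (the 2×2 matrix of partial derivatives) is nonzero at every point of U; consequently h is a diffeomorphism from U onto its image h(U). -/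
/-!
Put `C = cos (x/2) + cos (y/2)`, `a = Δx h₁ / 4 = sin (x/2) / C` and
`b = Δt h₂ / 4 = sin (y/2) / C`. On the unit circle
`(1 + cos u cos v)² - (sin u sin v)² = (cos u + cos v)²`; hence
`(1 + (a - b)²) (1 + (a + b)²) = (2 / C)²`, so
`sin (x/2) = 2a / √((1 + (a - b)²) (1 + (a + b)²))` and similarly for `y`.
Since `x/2, y/2 ∈ (-π/2, π/2)`, applying `arcsin` gives an explicit inverse of `h` on `U`,
differentiable on `h(U)` because `|sin (x/2)|, |sin (y/2)| < 1` there.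
The same identity shows that the Jacobian determinant equals `4 / (Δx Δt C²)`.
-/

open Real

/-- The frequency map `h = (h₁, h₂)` of the simple diamond scheme. -/
noncomputable def hmap (Δx Δt : ℝ) (p : ℝ × ℝ) : ℝ × ℝ :=
  (hone Δx p.1 p.2, htwo Δt p.1 p.2)

open Set

lemma one_add_cos_mul_cos_sq_sub_sin_mul_sin_sq (u v : ℝ) :
    (1 + cos u * cos v) ^ 2 - (sin u * sin v) ^ 2 = (cos u + cos v) ^ 2 := by
  linear_combination (-sin v ^ 2) * sin_sq_add_cos_sq u
    - (1 - cos u ^ 2) * sin_sq_add_cos_sq v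

lemma cos_half_pos {x : ℝ} (hx : x ∈ Ioo (-π) π) : 0 < cos (x / 2) :=
  cos_pos_of_mem_Ioo ⟨by linarith [hx.1], by linarith [hx.2]⟩

lemma cos_half_add_cos_half_pos {x y : ℝ} (hx : x ∈ Ioo (-π) π) (hy : y ∈ Ioo (-π) π) :
    0 < cos (x / 2) + cos (y / 2) :=
  add_pos (cos_half_pos hx) (cos_half_pos hy)

lemma sin_half_mem_Ioo {x : ℝ} (hx : x ∈ Ioo (-π) π) : sin (x / 2) ∈ Ioo (-1) 1 := by
  have hcos := cos_half_pos hx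
  have hsq := sin_sq_add_cos_sq (x / 2)
  constructor <;> nlinarith [neg_one_le_sin (x / 2), sin_le_one (x / 2)]

noncomputable def sinHalfRatio (x y : ℝ) : ℝ :=
  sin (x / 2) / (cos (x / 2) + cos (y / 2))

lemma hone_eq (Δ x y : ℝ) : hone Δ x y = 4 / Δ * sinHalfRatio x y :=
  mul_div_mul_comm _ _ _ _

lemma htwo_eq (Δ x y : ℝ) : htwo Δ x y = 4 / Δ * sinHalfRatio y x := by
  rw [htwo, sinHalfRatio, add_comm (cos (y / 2))]
  exact mul_div_mul_comm _ _ _ _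

lemma hasDerivAt_sinHalfRatio_left {x y : ℝ} (h : cos (x / 2) + cos (y / 2) ≠ 0) :
    HasDerivAt (sinHalfRatio · y)
      ((1 + cos (x / 2) * cos (y / 2)) / (2 * (cos (x / 2) + cos (y / 2)) ^ 2)) x := by
  have hhalf : HasDerivAt (· / 2) (1 / 2 : ℝ) x := (hasDerivAt_id x).div_const 2
  refine (((hasDerivAt_sin _).comp x hhalf).div
    (((hasDerivAt_cos _).comp x hhalf).add_const (cos (y / 2))) h).congr_deriv ?_
  simp only [Function.comp_apply]
  field_simp
  linear_combination sin_sq_add_cos_sq (x / 2)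

lemma hasDerivAt_sinHalfRatio_right {x y : ℝ} (h : cos (x / 2) + cos (y / 2) ≠ 0) :
    HasDerivAt (sinHalfRatio x ·)
      (sin (x / 2) * sin (y / 2) / (2 * (cos (x / 2) + cos (y / 2)) ^ 2)) y := by
  have hhalf : HasDerivAt (· / 2) (1 / 2 : ℝ) y := (hasDerivAt_id y).div_const 2
  refine ((hasDerivAt_const y (sin (x / 2))).div
    (((hasDerivAt_cos _).comp y hhalf).const_add (cos (x / 2))) h).congr_deriv ?_
  simp only [Function.comp_apply]
  field_simp
  ring

noncomputable def diamondNorm (a b : ℝ) : ℝ :=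
  √((1 + (a - b) ^ 2) * (1 + (a + b) ^ 2))

lemma diamondNorm_pos (a b : ℝ) : 0 < diamondNorm a b := by
  unfold diamondNorm; positivity

lemma diamondNorm_sinHalfRatio {x y : ℝ} (h : 0 < cos (x / 2) + cos (y / 2)) :
    diamondNorm (sinHalfRatio x y) (sinHalfRatio y x) = 2 / (cos (x / 2) + cos (y / 2)) := by
  have hsq : (1 + (sinHalfRatio x y - sinHalfRatio y x) ^ 2) *
      (1 + (sinHalfRatio x y + sinHalfRatio y x) ^ 2) =
        (2 / (cos (x / 2) + cos (y / 2))) ^ 2 := by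
    rw [sinHalfRatio, sinHalfRatio, add_comm (cos (y / 2))]
    field_simp
    -- `C² + (s₁ ∓ s₂)² = 2 (1 + c₁ c₂ ∓ s₁ s₂)` on the unit circle
    linear_combination 4 * one_add_cos_mul_cos_sq_sub_sin_mul_sin_sq (x / 2) (y / 2) +
      (2 + 4 * cos (x / 2) * cos (y / 2) + sin (x / 2) ^ 2 + cos (x / 2) ^ 2
        + sin (y / 2) ^ 2 + cos (y / 2) ^ 2) *
        (sin_sq_add_cos_sq (x / 2) + sin_sq_add_cos_sq (y / 2))
  rw [diamondNorm, hsq, sqrt_sq (by positivity)]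

lemma diamondNorm_comm (a b : ℝ) : diamondNorm a b = diamondNorm b a := by
  rw [diamondNorm, diamondNorm, ← neg_sub, neg_sq, add_comm a]

lemma two_mul_sinHalfRatio_div_diamondNorm {x y : ℝ} (h : 0 < cos (x / 2) + cos (y / 2)) :
    2 * sinHalfRatio x y / diamondNorm (sinHalfRatio x y) (sinHalfRatio y x) = sin (x / 2) := by
  rw [diamondNorm_sinHalfRatio h, sinHalfRatio]
  field_simp

noncomputable def ratioInv (a b : ℝ) : ℝ × ℝ :=
  (2 * arcsin (2 * a / diamondNorm a b), 2 * arcsin (2 * b / diamondNorm a b))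

lemma ratioInv_sinHalfRatio {x y : ℝ} (hx : x ∈ Ioo (-π) π) (hy : y ∈ Ioo (-π) π) :
    ratioInv (sinHalfRatio x y) (sinHalfRatio y x) = (x, y) := by
  rw [ratioInv, two_mul_sinHalfRatio_div_diamondNorm (cos_half_add_cos_half_pos hx hy),
    diamondNorm_comm, two_mul_sinHalfRatio_div_diamondNorm (cos_half_add_cos_half_pos hy hx),
    arcsin_sin (by linarith [hx.1]) (by linarith [hx.2]),
    arcsin_sin (by linarith [hy.1]) (by linarith [hy.2])]
  congr 1 <;> ring

lemma differentiableAt_ratioInv {a b : ℝ} (ha : 2 * a / diamondNorm a b ∈ Ioo (-1) 1)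
    (hb : 2 * b / diamondNorm a b ∈ Ioo (-1) 1) :
    DifferentiableAt ℝ (fun q : ℝ × ℝ => ratioInv q.1 q.2) (a, b) := by
  have hN : DifferentiableAt ℝ (fun q : ℝ × ℝ => diamondNorm q.1 q.2) (a, b) := by
    unfold diamondNorm
    exact DifferentiableAt.sqrt (by fun_prop) (by positivity)
  have hN0 : diamondNorm a b ≠ 0 := (diamondNorm_pos a b).ne'
  have arcsin_at {t : ℝ} (ht : t ∈ Ioo (-1) 1) : DifferentiableAt ℝ arcsin t :=
    differentiableAt_arcsin.mpr ⟨ht.1.ne', ht.2.ne⟩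
  have h₁ : DifferentiableAt ℝ (fun q : ℝ × ℝ => 2 * q.1 / diamondNorm q.1 q.2) (a, b) :=
    by fun_prop (disch := exact hN0)
  have h₂ : DifferentiableAt ℝ (fun q : ℝ × ℝ => 2 * q.2 / diamondNorm q.1 q.2) (a, b) :=
    by fun_prop (disch := exact hN0)
  exact ((((arcsin_at ha).comp (a, b) h₁).const_mul 2).prodMk
    (((arcsin_at hb).comp (a, b) h₂).const_mul 2))

noncomputable def hmapInv (Δx Δt : ℝ) (q : ℝ × ℝ) : ℝ × ℝ :=
  ratioInv (Δx * q.1 / 4) (Δt * q.2 / 4)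

lemma hmap_eq (Δx Δt : ℝ) :
    hmap Δx Δt = fun p => (4 / Δx * sinHalfRatio p.1 p.2, 4 / Δt * sinHalfRatio p.2 p.1) := by
  ext p <;> simp only [hmap, hone_eq, htwo_eq]

lemma scaled_hmap_eq {Δx Δt : ℝ} (hΔx : Δx ≠ 0) (hΔt : Δt ≠ 0) (p : ℝ × ℝ) :
    (Δx * (hmap Δx Δt p).1 / 4, Δt * (hmap Δx Δt p).2 / 4) =
      (sinHalfRatio p.1 p.2, sinHalfRatio p.2 p.1) := by
  rw [hmap_eq]
  congr 1 <;> field_simp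

lemma hmapInv_hmap {Δx Δt : ℝ} (hΔx : Δx ≠ 0) (hΔt : Δt ≠ 0) {p : ℝ × ℝ}
    (hp : p ∈ Ioo (-π) π ×ˢ Ioo (-π) π) : hmapInv Δx Δt (hmap Δx Δt p) = p := by
  have := congrArg (fun q : ℝ × ℝ => ratioInv q.1 q.2) (scaled_hmap_eq hΔx hΔt p)
  simpa only [hmapInv, ratioInv_sinHalfRatio hp.1 hp.2] using this

lemma differentiableAt_hmapInv {Δx Δt : ℝ} (hΔx : Δx ≠ 0) (hΔt : Δt ≠ 0) {p : ℝ × ℝ}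
    (hp : p ∈ Ioo (-π) π ×ˢ Ioo (-π) π) :
    DifferentiableAt ℝ (hmapInv Δx Δt) (hmap Δx Δt p) := by
  have hinv : DifferentiableAt ℝ (fun q : ℝ × ℝ => ratioInv q.1 q.2)
      (sinHalfRatio p.1 p.2, sinHalfRatio p.2 p.1) := by
    apply differentiableAt_ratioInv
    · rw [two_mul_sinHalfRatio_div_diamondNorm (cos_half_add_cos_half_pos hp.1 hp.2)]
      exact sin_half_mem_Ioo hp.1
    · rw [diamondNorm_comm,
        two_mul_sinHalfRatio_div_diamondNorm (cos_half_add_cos_half_pos hp.2 hp.1)]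
      exact sin_half_mem_Ioo hp.2
  rw [← scaled_hmap_eq hΔx hΔt p] at hinv
  exact hinv.comp (f := fun q : ℝ × ℝ => (Δx * q.1 / 4, Δt * q.2 / 4)) _ (by fun_prop)

lemma differentiableAt_hmap (Δx Δt : ℝ) {p : ℝ × ℝ}
    (h : cos (p.1 / 2) + cos (p.2 / 2) ≠ 0) :
    DifferentiableAt ℝ (hmap Δx Δt) p := by
  have h' : cos (p.2 / 2) + cos (p.1 / 2) ≠ 0 := by rwa [add_comm]
  rw [hmap_eq]
  unfold sinHalfRatio
  fun_prop (disch := assumption)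

lemma det_partials_hmap {Δx Δt : ℝ} (hΔx : Δx ≠ 0) (hΔt : Δt ≠ 0) {p : ℝ × ℝ}
    (h : cos (p.1 / 2) + cos (p.2 / 2) ≠ 0) :
    Matrix.det
        !![deriv (fun x => hone Δx x p.2) p.1, deriv (fun y => hone Δx p.1 y) p.2;
           deriv (fun x => htwo Δt x p.2) p.1, deriv (fun y => htwo Δt p.1 y) p.2] =
      4 / (Δx * Δt * (cos (p.1 / 2) + cos (p.2 / 2)) ^ 2) := by
  have h' : cos (p.2 / 2) + cos (p.1 / 2) ≠ 0 := by rwa [add_comm]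
  simp only [hone_eq, htwo_eq, deriv_const_mul_field', (hasDerivAt_sinHalfRatio_left h).deriv,
    (hasDerivAt_sinHalfRatio_right h).deriv, (hasDerivAt_sinHalfRatio_left h').deriv,
    (hasDerivAt_sinHalfRatio_right h').deriv, Matrix.det_fin_two_of]
  rw [add_comm (cos (p.2 / 2))]
  field_simp
  linear_combination 4 * one_add_cos_mul_cos_sq_sub_sin_mul_sin_sq (p.1 / 2) (p.2 / 2)

/-- On `U = (−π, π) × (−π, π)` the map `h` is injective, differentiable with
everywhere nonvanishing Jacobian determinant, and is a diffeomorphism from `U`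
onto its image `h(U)`. -/
theorem hmap_diffeomorphism (Δx Δt : ℝ) (hΔx : 0 < Δx) (hΔt : 0 < Δt) :
    Set.InjOn (hmap Δx Δt) (Set.Ioo (-π) π ×ˢ Set.Ioo (-π) π) ∧
    (∀ p ∈ Set.Ioo (-π) π ×ˢ Set.Ioo (-π) π, DifferentiableAt ℝ (hmap Δx Δt) p) ∧
    (∀ p ∈ Set.Ioo (-π) π ×ˢ Set.Ioo (-π) π,
      (Matrix.det
        !![deriv (fun x => hone Δx x p.2) p.1, deriv (fun y => hone Δx p.1 y) p.2;
           deriv (fun x => htwo Δt x p.2) p.1, deriv (fun y => htwo Δt p.1 y) p.2]) ≠ 0) ∧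
    (∃ g : ℝ × ℝ → ℝ × ℝ,
      Set.EqOn (g ∘ hmap Δx Δt) id (Set.Ioo (-π) π ×ˢ Set.Ioo (-π) π) ∧
      Set.EqOn (hmap Δx Δt ∘ g) id (hmap Δx Δt '' (Set.Ioo (-π) π ×ˢ Set.Ioo (-π) π)) ∧
      DifferentiableOn ℝ g (hmap Δx Δt '' (Set.Ioo (-π) π ×ˢ Set.Ioo (-π) π))) := by
  have hC {p : ℝ × ℝ} (hp : p ∈ Ioo (-π) π ×ˢ Ioo (-π) π) :=
    cos_half_add_cos_half_pos hp.1 hp.2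
  have hinv {p : ℝ × ℝ} (hp : p ∈ Ioo (-π) π ×ˢ Ioo (-π) π) :=
    hmapInv_hmap hΔx.ne' hΔt.ne' hp
  refine ⟨LeftInvOn.injOn fun p hp ↦ hinv hp,
    fun p hp ↦ differentiableAt_hmap Δx Δt (hC hp).ne', fun p hp ↦ ?_,
    hmapInv Δx Δt, fun p hp ↦ hinv hp, ?_, ?_⟩
  · rw [det_partials_hmap hΔx.ne' hΔt.ne' (hC hp).ne']
    have := hC hp
    positivity
  · rintro _ ⟨p, hp, rfl⟩
    simp only [Function.comp_apply, hinv hp, id]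
  · rintro _ ⟨p, hp, rfl⟩
    exact (differentiableAt_hmapInv hΔx.ne' hΔt.ne' hp).differentiableWithinAt
end

section
/- Let Δx, Δt > 0 with Δt ≤ Δx (Courant number λ = Δt/Δx ≤ 1). Then for every x ∈ (−π, π) there exists y ∈ (−π, π) such that h₁(x,y) = h₂(x,y), where h₁(x,y) = 4 sin(x/2) / (Δx (cos(x/2) + cos(y/2))) and h₂(x,y) = 4 sin(y/2) / (Δt (cos(x/2) + cos(y/2))); indeed y = 2 arcsin(λ sin(x/2)) works. In particular, for every discrete wave number X with XΔx ∈ (−π, π) there is a real discrete frequency Ω with ΩΔt ∈ (−π, π) satisfying the simple-diamond-scheme dispersion relation h₁(XΔx, ΩΔt)² − h₂(XΔx, ΩΔt)² = 0 of the linear wave equation. -/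
open Real

/-- Stability of the simple diamond scheme for the linear wave equation when the
Courant number `λ = Δt/Δx ≤ 1`: for every discrete wave number there is a real
discrete frequency solving the dispersion relation `h₁² − h₂² = 0`; indeed
`y = 2 arcsin(λ sin(x/2))` works. -/
theorem simple_diamond_wave_stability (Δx Δt : ℝ) (hΔx : 0 < Δx) (hΔt : 0 < Δt)
    (hcourant : Δt ≤ Δx) :
    (∀ x ∈ Set.Ioo (-π) π,
      2 * Real.arcsin (Δt / Δx * Real.sin (x / 2)) ∈ Set.Ioo (-π) π ∧
      hone Δx x (2 * Real.arcsin (Δt / Δx * Real.sin (x / 2)))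
        = htwo Δt x (2 * Real.arcsin (Δt / Δx * Real.sin (x / 2)))) ∧
    (∀ X : ℝ, X * Δx ∈ Set.Ioo (-π) π →
      ∃ Ω : ℝ, Ω * Δt ∈ Set.Ioo (-π) π ∧
        (hone Δx (X * Δx) (Ω * Δt)) ^ 2 - (htwo Δt (X * Δx) (Ω * Δt)) ^ 2 = 0) := by
  have hlpos : 0 < Δt / Δx := div_pos hΔt hΔx
  have hlle : Δt / Δx ≤ 1 := (div_le_one hΔx).mpr hcourant
  have main : ∀ x ∈ Set.Ioo (-π) π,
      2 * Real.arcsin (Δt / Δx * Real.sin (x / 2)) ∈ Set.Ioo (-π) π ∧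
      hone Δx x (2 * Real.arcsin (Δt / Δx * Real.sin (x / 2)))
        = htwo Δt x (2 * Real.arcsin (Δt / Δx * Real.sin (x / 2))) := by
    intro x hx
    obtain ⟨hx1, hx2⟩ := hx
    have hx2' : x / 2 ∈ Set.Ioo (-(π/2)) (π/2) := ⟨by linarith, by linarith⟩
    have hcosx : 0 < Real.cos (x / 2) := Real.cos_pos_of_mem_Ioo hx2'
    have hsinsq : (Real.sin (x / 2)) ^ 2 < 1 := by
      have := Real.sin_sq_add_cos_sq (x / 2)
      nlinarith
    have habs : |Real.sin (x / 2)| < 1 := (sq_lt_one_iff_abs_lt_one _).1 hsinsq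
    set s := Real.sin (x / 2) with hs
    set t := Δt / Δx * s with ht
    have habs_t : |t| < 1 := by
      rw [ht, abs_mul, abs_of_pos hlpos]
      calc Δt / Δx * |s| ≤ 1 * |s| :=
            mul_le_mul_of_nonneg_right hlle (abs_nonneg s)
        _ = |s| := one_mul _
        _ < 1 := habs
    have ht1 : -1 < t := (abs_lt.mp habs_t).1
    have ht2 : t < 1 := (abs_lt.mp habs_t).2
    have harc1 : -(π/2) < Real.arcsin t := Real.neg_pi_div_two_lt_arcsin.2 ht1
    have harc2 : Real.arcsin t < π/2 := Real.arcsin_lt_pi_div_two.2 ht2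
    have hymem : 2 * Real.arcsin t ∈ Set.Ioo (-π) π := ⟨by linarith, by linarith⟩
    refine ⟨hymem, ?_⟩
    have hy2 : 2 * Real.arcsin t / 2 = Real.arcsin t := by ring
    have hsin_y : Real.sin (2 * Real.arcsin t / 2) = t := by
      rw [hy2, Real.sin_arcsin ht1.le ht2.le]
    have hcos_y : 0 < Real.cos (2 * Real.arcsin t / 2) := by
      rw [hy2]; exact Real.cos_pos_of_mem_Ioo ⟨harc1, harc2⟩
    unfold hone htwo
    rw [hsin_y, ht]
    set c := Real.cos (x / 2) + Real.cos (2 * Real.arcsin t / 2) with hc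
    have hcpos : 0 < c := by rw [hc]; exact add_pos hcosx hcos_y
    rw [div_eq_div_iff (by positivity) (by positivity)]
    field_simp
    ring
  refine ⟨main, fun X hX => ?_⟩
  obtain ⟨hymem, heq⟩ := main (X * Δx) hX
  refine ⟨2 * Real.arcsin (Δt / Δx * Real.sin (X * Δx / 2)) / Δt, ?_, ?_⟩
  · rwa [div_mul_cancel₀ _ hΔt.ne']
  · rw [div_mul_cancel₀ _ hΔt.ne', heq]; ring
end

section
/- Let n ≥ 1, let K and L be real skew-symmetric n×n matrices, let M be a real symmetric n×n matrix, and let Δx, Δt > 0. Suppose u₀¹, u₀⁻¹, u₁⁰, u₋₁⁰ ∈ ℝⁿ and v₀¹, v₀⁻¹, v₁⁰, v₋₁⁰ ∈ ℝⁿ satisfy the linearized simple diamond scheme: K(u₀¹ − u₀⁻¹)/Δt + L(u₁⁰ − u₋₁⁰)/Δx = M u₀⁰ with u₀⁰ = (u₀¹ + u₁⁰ + u₀⁻¹ + u₋₁⁰)/4, and likewise K(v₀¹ − v₀⁻¹)/Δt + L(v₁⁰ − v₋₁⁰)/Δx = M v₀⁰ with v₀⁰ = (v₀¹ + v₁⁰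 + v₀⁻¹ + v₋₁⁰)/4. Then (1/(4Δt))[⟨u₋₁⁰ + u₀¹ + u₁⁰, K v₀¹⟩ − ⟨v₋₁⁰ + v₀¹ + v₁⁰, K u₀¹⟩ − ⟨u₋₁⁰ + u₀⁻¹ + u₁⁰, K v₀⁻¹⟩ + ⟨v₋₁⁰ + v₀⁻¹ + v₁⁰, K u₀⁻¹⟩] + (1/(4Δx))[⟨u₀¹ + u₁⁰ + u₀⁻¹, L v₁⁰⟩ − ⟨v₀¹ + v₁⁰ + v₀⁻¹, L u₁⁰⟩ − ⟨u₀¹ + u₋₁⁰ + u₀⁻¹, L v₋₁⁰⟩ + ⟨v₀¹ + v₋₁⁰ + v₀⁻¹, L u₋₁⁰⟩] = 0, where ⟨·,·⟩ is the standard inner product on ℝⁿ. -/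
open Matrix

private lemma skewDot {n : ℕ} {A : Matrix (Fin n) (Fin n) ℝ} (hA : Aᵀ = -A)
    (x y : Fin n → ℝ) : x ⬝ᵥ A.mulVec y = -(y ⬝ᵥ A.mulVec x) := by
  rw [Matrix.dotProduct_mulVec, ← Matrix.mulVec_transpose, hA, Matrix.neg_mulVec,
    neg_dotProduct, dotProduct_comm]

private lemma symmDot {n : ℕ} {A : Matrix (Fin n) (Fin n) ℝ} (hA : Aᵀ = A)
    (x y : Fin n → ℝ) : x ⬝ᵥ A.mulVec y = y ⬝ᵥ A.mulVec x := by
  rw [Matrix.dotProduct_mulVec, ← Matrix.mulVec_transpose, hA, dotProduct_comm]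


/-- Discrete multisymplectic conservation law of the simple diamond scheme: an
identity satisfied by any two solutions `u`, `v` of the linearized scheme. -/
theorem simple_diamond_conservation_law (n : ℕ) (hn : 1 ≤ n)
    (K L M : Matrix (Fin n) (Fin n) ℝ)
    (hK : Kᵀ = -K) (hL : Lᵀ = -L) (hM : Mᵀ = M)
    (Δx Δt : ℝ) (hΔx : 0 < Δx) (hΔt : 0 < Δt)
    (u01 u0m1 u10 um10 v01 v0m1 v10 vm10 : Fin n → ℝ)
    (hu : (1 / Δt) • K.mulVec (u01 - u0m1) + (1 / Δx) • L.mulVec (u10 - um10)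
        = M.mulVec ((1 / 4 : ℝ) • (u01 + u10 + u0m1 + um10)))
    (hv : (1 / Δt) • K.mulVec (v01 - v0m1) + (1 / Δx) • L.mulVec (v10 - vm10)
        = M.mulVec ((1 / 4 : ℝ) • (v01 + v10 + v0m1 + vm10))) :
    (1 / (4 * Δt)) *
      ((um10 + u01 + u10) ⬝ᵥ K.mulVec v01 - (vm10 + v01 + v10) ⬝ᵥ K.mulVec u01
        - (um10 + u0m1 + u10) ⬝ᵥ K.mulVec v0m1 + (vm10 + v0m1 + v10) ⬝ᵥ K.mulVec u0m1)
    + (1 / (4 * Δx)) *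
      ((u01 + u10 + u0m1) ⬝ᵥ L.mulVec v10 - (v01 + v10 + v0m1) ⬝ᵥ L.mulVec u10
        - (u01 + um10 + u0m1) ⬝ᵥ L.mulVec vm10 + (v01 + vm10 + v0m1) ⬝ᵥ L.mulVec um10)
    = 0 := by

  have hu' := congrArg (fun w => (v01 + v10 + v0m1 + vm10) ⬝ᵥ w) hu
  have hv' := congrArg (fun w => (u01 + u10 + u0m1 + um10) ⬝ᵥ w) hv
  simp only [Matrix.mulVec_smul, Matrix.mulVec_sub, Matrix.mulVec_add,
    dotProduct_add, add_dotProduct, dotProduct_sub,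
    sub_dotProduct, dotProduct_smul, smul_eq_mul] at hu' hv' ⊢
  have hk00 := skewDot hK v01 u01
  have hl00 := skewDot hL v01 u01
  have hm00 := symmDot hM v01 u01
  have hk01 := skewDot hK v0m1 u01
  have hl01 := skewDot hL v0m1 u01
  have hm01 := symmDot hM v0m1 u01
  have hk02 := skewDot hK v10 u01
  have hl02 := skewDot hL v10 u01
  have hm02 := symmDot hM v10 u01
  have hk03 := skewDot hK vm10 u01
  have hl03 := skewDot hL vm10 u01
  have hm03 := symmDot hM vm10 u01
  have hk10 := skewDot hK v01 u0m1
  have hl10 := skewDot hL v01 u0m1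
  have hm10 := symmDot hM v01 u0m1
  have hk11 := skewDot hK v0m1 u0m1
  have hl11 := skewDot hL v0m1 u0m1
  have hm11 := symmDot hM v0m1 u0m1
  have hk12 := skewDot hK v10 u0m1
  have hl12 := skewDot hL v10 u0m1
  have hm12 := symmDot hM v10 u0m1
  have hk13 := skewDot hK vm10 u0m1
  have hl13 := skewDot hL vm10 u0m1
  have hm13 := symmDot hM vm10 u0m1
  have hk20 := skewDot hK v01 u10
  have hl20 := skewDot hL v01 u10
  have hm20 := symmDot hM v01 u10
  have hk21 := skewDot hK v0m1 u10
  have hl21 := skewDot hL v0m1 u10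
  have hm21 := symmDot hM v0m1 u10
  have hk22 := skewDot hK v10 u10
  have hl22 := skewDot hL v10 u10
  have hm22 := symmDot hM v10 u10
  have hk23 := skewDot hK vm10 u10
  have hl23 := skewDot hL vm10 u10
  have hm23 := symmDot hM vm10 u10
  have hk30 := skewDot hK v01 um10
  have hl30 := skewDot hL v01 um10
  have hm30 := symmDot hM v01 um10
  have hk31 := skewDot hK v0m1 um10
  have hl31 := skewDot hL v0m1 um10
  have hm31 := symmDot hM v0m1 um10
  have hk32 := skewDot hK v10 um10
  have hl32 := skewDot hL v10 um10
  have hm32 := symmDot hM v10 um10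
  have hk33 := skewDot hK vm10 um10
  have hl33 := skewDot hL vm10 um10
  have hm33 := symmDot hM vm10 um10
  simp only [hk00, hl00, hm00, hk01, hl01, hm01, hk02, hl02, hm02, hk03, hl03, hm03, hk10, hl10, hm10, hk11, hl11, hm11, hk12, hl12, hm12, hk13, hl13, hm13, hk20, hl20, hm20, hk21, hl21, hm21, hk22, hl22, hm22, hk23, hl23, hm23, hk30, hl30, hm30, hk31, hl31, hm31, hk32, hl32, hm32, hk33, hl33, hm33] at hu' hv' ⊢
  linear_combination (1/4 : ℝ) * hv' - (1/4 : ℝ) * hu'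
end

section
/- Let n ≥ 1 and r ≥ 1. Let K and L be real skew-symmetric n×n matrices, Δx, Δt > 0, and set K̃ = (1/Δt)K − (1/Δx)L, L̃ = (1/Δt)K + (1/Δx)L. Let A : Fin r × Fin r → ℝ and b : Fin r → ℝ be Runge–Kutta coefficients satisfying the symplecticity condition bᵢ Aᵢⱼ + bⱼ Aⱼᵢ = bᵢ bⱼ for all i, j. For each i, j ∈ Fin r let Mᵢⱼ be a real symmetric n×n matrix. Suppose that each of two variations (u and v) consists of stage vectors Zᵢⱼ, Xᵢⱼ, Tᵢⱼ ∈ ℝⁿ and edge vectors zₗⁱ, z_bᵢ, zᵣⁱ, z_tᵢ ∈ ℝⁿ satisfying the linearized diamond scheme: Zᵢⱼ = zₗʲ + Σₖ Aᵢₖ Xₖⱼ; Zᵢⱼ = z_bᵢ + Σₖ Aⱼₖ Tᵢₖ; Mᵢⱼ Zᵢⱼ = K̃ Tᵢⱼ + L̃ Xᵢⱼ; zᵣⁱ = zₗⁱ + Σₖ bₖ Xₖᵢ; z_tᵢ = z_bᵢ + Σₖ bₖ Tᵢₖ (with the same matrices Mᵢⱼ for both variations). Writing ω(a, c) = ⟨a,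 K c⟩ − ⟨c, K a⟩ and κ(a, c) = ⟨a, L c⟩ − ⟨c, L a⟩, the discrete conservation law holds: (1/Δt) Σᵢ bᵢ [ω(u_tᵢ, v_tᵢ) + ω(uᵣⁱ, vᵣⁱ) − ω(uₗⁱ, vₗⁱ) − ω(u_bᵢ, v_bᵢ)] + (1/Δx) Σᵢ bᵢ [κ(uᵣⁱ, vᵣⁱ) + κ(u_bᵢ, v_bᵢ) − κ(u_tᵢ, v_tᵢ) − κ(uₗⁱ, vₗⁱ)] = 0. -/
open Matrix Finset

/-- The 2-form `ω(a,c) = ⟨a, K c⟩ − ⟨c, K a⟩` associated with a matrix `K`. -/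
def twoForm {n : ℕ} (K : Matrix (Fin n) (Fin n) ℝ) (a c : Fin n → ℝ) : ℝ :=
  a ⬝ᵥ K.mulVec c - c ⬝ᵥ K.mulVec a

noncomputable def Bmat {n : ℕ} (N : Matrix (Fin n) (Fin n) ℝ) :
    (Fin n → ℝ) →ₗ[ℝ] (Fin n → ℝ) →ₗ[ℝ] ℝ :=
  LinearMap.mk₂ ℝ (fun a c => a ⬝ᵥ N.mulVec c)
    (fun a a' c => add_dotProduct a a' _)
    (fun s a c => smul_dotProduct s a _)
    (fun a c c' => by simp [Matrix.mulVec_add, dotProduct_add])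
    (fun s a c => by simp [Matrix.mulVec_smul, dotProduct_smul])

@[simp] lemma Bmat_apply {n : ℕ} (N : Matrix (Fin n) (Fin n) ℝ) (a c : Fin n → ℝ) :
    Bmat N a c = a ⬝ᵥ N.mulVec c := rfl

lemma twoForm_eq {n : ℕ} (N : Matrix (Fin n) (Fin n) ℝ) (a c : Fin n → ℝ) :
    twoForm N a c = Bmat N a c - Bmat N c a := rfl

lemma symp_sum {r : ℕ} (A : Fin r → Fin r → ℝ) (b : Fin r → ℝ)
    (hsymp : ∀ i j, b i * A i j + b j * A j i = b i * b j)
    (f : Fin r → Fin r → ℝ) :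
    ∑ j, ∑ k, (b j * b k) * f j k
      = ∑ j, ∑ k, (b j * A j k) * f j k + ∑ j, ∑ k, (b j * A j k) * f k j := by
  have h2 : ∑ j, ∑ k, (b j * A j k) * f k j = ∑ j, ∑ k, (b k * A k j) * f j k := by
    rw [Finset.sum_comm]
  rw [h2, ← Finset.sum_add_distrib]
  refine Finset.sum_congr rfl fun j _ => ?_
  rw [← Finset.sum_add_distrib]
  refine Finset.sum_congr rfl fun k _ => ?_
  rw [← add_mul, hsymp]

lemma rk_stepB {n r : ℕ} (B : (Fin n → ℝ) →ₗ[ℝ] (Fin n → ℝ) →ₗ[ℝ] ℝ)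
    (A : Fin r → Fin r → ℝ) (b : Fin r → ℝ)
    (hsymp : ∀ i j, b i * A i j + b j * A j i = b i * b j)
    (u0 v0 u1 v1 : Fin n → ℝ) (uT vT uZ vZ : Fin r → Fin n → ℝ)
    (huZ : ∀ j, uZ j = u0 + ∑ k, A j k • uT k)
    (hvZ : ∀ j, vZ j = v0 + ∑ k, A j k • vT k)
    (hu1 : u1 = u0 + ∑ k, b k • uT k)
    (hv1 : v1 = v0 + ∑ k, b k • vT k) :
    (B u1 v1 - B v1 u1) - (B u0 v0 - B v0 u0)
      = ∑ j, b j * ((B (uT j) (vZ j) - B (vZ j) (uT j))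
          + (B (uZ j) (vT j) - B (vT j) (uZ j))) := by
  -- RHS rewrite
  have hR : ∑ j, b j * ((B (uT j) (vZ j) - B (vZ j) (uT j))
          + (B (uZ j) (vT j) - B (vT j) (uZ j)))
      = ∑ j, b j * (B (uT j) v0 - B v0 (uT j) + (B u0 (vT j) - B (vT j) u0))
        + ∑ j, ∑ k, (b j * A j k) *
            ((B (uT j) (vT k) - B (vT k) (uT j)) + (B (uT k) (vT j) - B (vT j) (uT k))) := by
    rw [← Finset.sum_add_distrib]
    refine Finset.sum_congr rfl fun j _ => ?_
    simp only [huZ, hvZ, map_add, map_sum, _root_.map_smul, LinearMap.add_apply,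
      LinearMap.sum_apply, LinearMap.smul_apply, smul_eq_mul]
    simp only [mul_add, mul_sub, Finset.mul_sum, Finset.sum_add_distrib,
      Finset.sum_sub_distrib]
    ring_nf
  rw [hR]
  have hD := symp_sum A b hsymp (fun j k => B (uT j) (vT k) - B (vT k) (uT j))
  subst hu1 hv1
  simp only [map_add, map_sum, _root_.map_smul, LinearMap.add_apply,
    LinearMap.sum_apply, LinearMap.smul_apply, smul_eq_mul]
  simp only [mul_add, mul_sub, Finset.mul_sum, Finset.sum_add_distrib,
    Finset.sum_sub_distrib]
  simp only [mul_sub, mul_add, Finset.sum_sub_distrib, Finset.sum_add_distrib] at hD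
  ring_nf
  ring_nf at hD
  have c1 : ∑ x : Fin r, ∑ y : Fin r, b x * b y * (B (uT y)) (vT x)
      = ∑ x : Fin r, ∑ y : Fin r, b x * b y * (B (uT x)) (vT y) := by
    rw [Finset.sum_comm]
    exact Finset.sum_congr rfl fun x _ => Finset.sum_congr rfl fun y _ => by ring
  linarith [hD, c1]

lemma skew_dot {n : ℕ} {N : Matrix (Fin n) (Fin n) ℝ} (hN : Nᵀ = -N) (a c : Fin n → ℝ) :
    a ⬝ᵥ N.mulVec c = -(c ⬝ᵥ N.mulVec a) := by
  rw [dotProduct_mulVec, ← Matrix.mulVec_transpose, hN, Matrix.neg_mulVec,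
    neg_dotProduct, dotProduct_comm]

lemma sym_dot {n : ℕ} {N : Matrix (Fin n) (Fin n) ℝ} (hN : Nᵀ = N) (a c : Fin n → ℝ) :
    a ⬝ᵥ N.mulVec c = c ⬝ᵥ N.mulVec a := by
  rw [dotProduct_mulVec, ← Matrix.mulVec_transpose, hN, dotProduct_comm]

/-- Discrete multisymplectic conservation law of the `r`-stage diamond scheme,
an identity satisfied by any two solutions `u`, `v` of the linearized scheme
when the Runge–Kutta coefficients `(A, b)` are symplectic. -/
theorem diamond_scheme_conservation_law (n r : ℕ) (hn : 1 ≤ n) (hr : 1 ≤ r)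
    (K L : Matrix (Fin n) (Fin n) ℝ) (hK : Kᵀ = -K) (hL : Lᵀ = -L)
    (Δx Δt : ℝ) (hΔx : 0 < Δx) (hΔt : 0 < Δt)
    (Kt Lt : Matrix (Fin n) (Fin n) ℝ)
    (hKt : Kt = (1 / Δt) • K - (1 / Δx) • L)
    (hLt : Lt = (1 / Δt) • K + (1 / Δx) • L)
    (A : Fin r → Fin r → ℝ) (b : Fin r → ℝ)
    (hsymp : ∀ i j, b i * A i j + b j * A j i = b i * b j)
    (M : Fin r → Fin r → Matrix (Fin n) (Fin n) ℝ) (hM : ∀ i j, (M i j)ᵀ = M i j)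
    (uZ uX uT : Fin r → Fin r → Fin n → ℝ) (ul ub ur ut : Fin r → Fin n → ℝ)
    (vZ vX vT : Fin r → Fin r → Fin n → ℝ) (vl vb vr vt : Fin r → Fin n → ℝ)
    (huZl : ∀ i j, uZ i j = ul j + ∑ k, A i k • uX k j)
    (huZb : ∀ i j, uZ i j = ub i + ∑ k, A j k • uT i k)
    (huS : ∀ i j, (M i j).mulVec (uZ i j) = Kt.mulVec (uT i j) + Lt.mulVec (uX i j))
    (hur : ∀ i, ur i = ul i + ∑ k, b k • uX k i)
    (hut : ∀ i, ut i = ub i + ∑ k, b k • uT i k)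
    (hvZl : ∀ i j, vZ i j = vl j + ∑ k, A i k • vX k j)
    (hvZb : ∀ i j, vZ i j = vb i + ∑ k, A j k • vT i k)
    (hvS : ∀ i j, (M i j).mulVec (vZ i j) = Kt.mulVec (vT i j) + Lt.mulVec (vX i j))
    (hvr : ∀ i, vr i = vl i + ∑ k, b k • vX k i)
    (hvt : ∀ i, vt i = vb i + ∑ k, b k • vT i k) :
    (1 / Δt) * ∑ i, b i *
        (twoForm K (ut i) (vt i) + twoForm K (ur i) (vr i)
          - twoForm K (ul i) (vl i) - twoForm K (ub i) (vb i))
    + (1 / Δx) * ∑ i, b i *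
        (twoForm L (ur i) (vr i) + twoForm L (ub i) (vb i)
          - twoForm L (ut i) (vt i) - twoForm L (ul i) (vl i))
    = 0 := by
  have skewKt : Ktᵀ = -Kt := by
    rw [hKt, Matrix.transpose_sub, Matrix.transpose_smul, Matrix.transpose_smul,
      hK, hL, smul_neg, smul_neg, neg_sub_neg]
    module
  have skewLt : Ltᵀ = -Lt := by
    rw [hLt, Matrix.transpose_add, Matrix.transpose_smul, Matrix.transpose_smul,
      hK, hL, smul_neg, smul_neg]
    module
  -- decomposition of the tilde two-forms
  have tfK : ∀ a c : Fin n → ℝ, twoForm Kt a c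
      = (1 / Δt) * twoForm K a c - (1 / Δx) * twoForm L a c := by
    intro a c
    simp only [twoForm, hKt, Matrix.sub_mulVec, Matrix.smul_mulVec,
      dotProduct_sub, dotProduct_smul, smul_eq_mul]
    ring
  have tfL : ∀ a c : Fin n → ℝ, twoForm Lt a c
      = (1 / Δt) * twoForm K a c + (1 / Δx) * twoForm L a c := by
    intro a c
    simp only [twoForm, hLt, Matrix.add_mulVec, Matrix.smul_mulVec,
      dotProduct_add, dotProduct_smul, smul_eq_mul]
    ring
  -- split the goal into tilde-form telescopes
  have hsplit : (1 / Δt) * ∑ i, b i *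
        (twoForm K (ut i) (vt i) + twoForm K (ur i) (vr i)
          - twoForm K (ul i) (vl i) - twoForm K (ub i) (vb i))
      + (1 / Δx) * ∑ i, b i *
        (twoForm L (ur i) (vr i) + twoForm L (ub i) (vb i)
          - twoForm L (ut i) (vt i) - twoForm L (ul i) (vl i))
      = ∑ i, b i * (twoForm Kt (ut i) (vt i) - twoForm Kt (ub i) (vb i))
        + ∑ i, b i * (twoForm Lt (ur i) (vr i) - twoForm Lt (ul i) (vl i)) := by
    rw [Finset.mul_sum, Finset.mul_sum, ← Finset.sum_add_distrib, ← Finset.sum_add_distrib]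
    refine Finset.sum_congr rfl fun i _ => ?_
    simp only [tfK, tfL]
    ring
  rw [hsplit]
  -- per-row telescopes via the RK step lemma
  have h1 : ∀ i, twoForm Kt (ut i) (vt i) - twoForm Kt (ub i) (vb i)
      = ∑ j, b j * ((Bmat Kt (uT i j) (vZ i j) - Bmat Kt (vZ i j) (uT i j))
          + (Bmat Kt (uZ i j) (vT i j) - Bmat Kt (vT i j) (uZ i j))) := by
    intro i
    simpa [twoForm_eq] using rk_stepB (Bmat Kt) A b hsymp (ub i) (vb i) (ut i) (vt i)
      (fun k => uT i k) (fun k => vT i k) (fun j => uZ i j) (fun j => vZ i j)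
      (fun j => huZb i j) (fun j => hvZb i j) (hut i) (hvt i)
  have h2 : ∀ i, twoForm Lt (ur i) (vr i) - twoForm Lt (ul i) (vl i)
      = ∑ j, b j * ((Bmat Lt (uX j i) (vZ j i) - Bmat Lt (vZ j i) (uX j i))
          + (Bmat Lt (uZ j i) (vX j i) - Bmat Lt (vX j i) (uZ j i))) := by
    intro i
    simpa [twoForm_eq] using rk_stepB (Bmat Lt) A b hsymp (ul i) (vl i) (ur i) (vr i)
      (fun k => uX k i) (fun k => vX k i) (fun j => uZ j i) (fun j => vZ j i)
      (fun j => huZl j i) (fun j => hvZl j i) (hur i) (hvr i)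
  -- pointwise cancellation
  have hz : ∀ i j, ((Bmat Kt (uT i j) (vZ i j) - Bmat Kt (vZ i j) (uT i j))
          + (Bmat Kt (uZ i j) (vT i j) - Bmat Kt (vT i j) (uZ i j)))
      + ((Bmat Lt (uX i j) (vZ i j) - Bmat Lt (vZ i j) (uX i j))
          + (Bmat Lt (uZ i j) (vX i j) - Bmat Lt (vX i j) (uZ i j))) = 0 := by
    intro i j
    have h6 : uZ i j ⬝ᵥ Kt.mulVec (vT i j) + uZ i j ⬝ᵥ Lt.mulVec (vX i j)
        = vZ i j ⬝ᵥ Kt.mulVec (uT i j) + vZ i j ⬝ᵥ Lt.mulVec (uX i j) := by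
      rw [← dotProduct_add, ← dotProduct_add, ← huS, ← hvS, sym_dot (hM i j)]
    have fK1 := skew_dot skewKt (uT i j) (vZ i j)
    have fK2 := skew_dot skewKt (vT i j) (uZ i j)
    have fL1 := skew_dot skewLt (uX i j) (vZ i j)
    have fL2 := skew_dot skewLt (vX i j) (uZ i j)
    simp only [Bmat_apply]
    linarith [h6, fK1, fK2, fL1, fL2]
  -- combine into a double sum and conclude
  have hE1 : ∑ i, b i * (twoForm Kt (ut i) (vt i) - twoForm Kt (ub i) (vb i))
      = ∑ i, ∑ j, (b i * b j) * (((Bmat Kt (uT i j) (vZ i j) - Bmat Kt (vZ i j) (uT i j))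
          + (Bmat Kt (uZ i j) (vT i j) - Bmat Kt (vT i j) (uZ i j)))) := by
    refine Finset.sum_congr rfl fun i _ => ?_
    rw [h1 i, Finset.mul_sum]
    exact Finset.sum_congr rfl fun j _ => by ring
  have hE2 : ∑ i, b i * (twoForm Lt (ur i) (vr i) - twoForm Lt (ul i) (vl i))
      = ∑ i, ∑ j, (b i * b j) * (((Bmat Lt (uX i j) (vZ i j) - Bmat Lt (vZ i j) (uX i j))
          + (Bmat Lt (uZ i j) (vX i j) - Bmat Lt (vX i j) (uZ i j)))) := by
    have : ∑ i, b i * (twoForm Lt (ur i) (vr i) - twoForm Lt (ul i) (vl i))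
        = ∑ i, ∑ j, (b i * b j) * (((Bmat Lt (uX j i) (vZ j i) - Bmat Lt (vZ j i) (uX j i))
            + (Bmat Lt (uZ j i) (vX j i) - Bmat Lt (vX j i) (uZ j i)))) := by
      refine Finset.sum_congr rfl fun i _ => ?_
      rw [h2 i, Finset.mul_sum]
      exact Finset.sum_congr rfl fun j _ => by ring
    rw [this, Finset.sum_comm]
    exact Finset.sum_congr rfl fun i _ => Finset.sum_congr rfl fun j _ => by ring
  rw [hE1, hE2, ← Finset.sum_add_distrib]
  refine Finset.sum_eq_zero fun i _ => ?_
  rw [← Finset.sum_add_distrib]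
  refine Finset.sum_eq_zero fun j _ => ?_
  rw [← mul_add, hz i j, mul_zero]
end

section
/- Let n ≥ 1, let K and L be real skew-symmetric n×n matrices, let S : ℝⁿ → ℝ be differentiable with gradient ∇S, let Δx, Δt > 0, and set K̃ = (1/Δt)K − (1/Δx)L, L̃ = (1/Δt)K + (1/Δx)L. Suppose the corner values z₀¹, z₁⁰, z₀⁻¹, z₋₁⁰ ∈ ℝⁿ satisfy the simple diamond scheme K(z₀¹ − z₀⁻¹)/Δt + L(z₁⁰ − z₋₁⁰)/Δx = ∇S((z₀¹ + z₁⁰ + z₀⁻¹ + z₋₁⁰)/4). Define the edge midpoint values z_b = (z₀⁻¹ + z₁⁰)/2, z_t = (z₋₁⁰ + z₀¹)/2, z_ℓ = (z₀⁻¹ + z₋₁⁰)/2, z_r = (z₁⁰ + z₀¹)/2. Then these values satisfy the r = 1 diamond scheme equations: K̃(z_t − z_b) + L̃(z_r − z_ℓ) = ∇S((z_t + z_b + z_r + z_ℓ)/4) and z_t − z_r + z_b − z_ℓ = 0. -/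
open Matrix

/-- Any solution of the simple diamond scheme, mapped to edge midpoint values,
satisfies the equations of the `r = 1` diamond scheme. -/
theorem simple_to_r1_diamond (n : ℕ) (hn : 1 ≤ n)
    (K L : Matrix (Fin n) (Fin n) ℝ) (hK : Kᵀ = -K) (hL : Lᵀ = -L)
    (S : (Fin n → ℝ) → ℝ) (gradS : (Fin n → ℝ) → (Fin n → ℝ))
    (hS : ∀ y, HasFDerivAt S
      (∑ i, gradS y i • (ContinuousLinearMap.proj i : (Fin n → ℝ) →L[ℝ] ℝ)) y)
    (Δx Δt : ℝ) (hΔx : 0 < Δx) (hΔt : 0 < Δt)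
    (Kt Lt : Matrix (Fin n) (Fin n) ℝ)
    (hKt : Kt = (1 / Δt) • K - (1 / Δx) • L)
    (hLt : Lt = (1 / Δt) • K + (1 / Δx) • L)
    (z01 z10 z0m1 zm10 : Fin n → ℝ)
    (hscheme : (1 / Δt) • K.mulVec (z01 - z0m1) + (1 / Δx) • L.mulVec (z10 - zm10)
        = gradS ((1 / 4 : ℝ) • (z01 + z10 + z0m1 + zm10)))
    (zb zt zl zr : Fin n → ℝ)
    (hzb : zb = (1 / 2 : ℝ) • (z0m1 + z10))
    (hzt : zt = (1 / 2 : ℝ) • (zm10 + z01))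
    (hzl : zl = (1 / 2 : ℝ) • (z0m1 + zm10))
    (hzr : zr = (1 / 2 : ℝ) • (z10 + z01)) :
    Kt.mulVec (zt - zb) + Lt.mulVec (zr - zl)
        = gradS ((1 / 4 : ℝ) • (zt + zb + zr + zl)) ∧
      zt - zr + zb - zl = 0 := by
  subst hKt hLt hzb hzt hzl hzr
  constructor
  · have harg : (1 / 4 : ℝ) • ((1 / 2 : ℝ) • (zm10 + z01) + (1 / 2 : ℝ) • (z0m1 + z10)
        + (1 / 2 : ℝ) • (z10 + z01) + (1 / 2 : ℝ) • (z0m1 + zm10))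
        = (1 / 4 : ℝ) • (z01 + z10 + z0m1 + zm10) := by module
    rw [harg, ← hscheme]
    have h1 : (1 / 2 : ℝ) • (zm10 + z01) - (1 / 2 : ℝ) • (z0m1 + z10)
        = (1 / 2 : ℝ) • (z01 - z0m1) - (1 / 2 : ℝ) • (z10 - zm10) := by module
    have h2 : (1 / 2 : ℝ) • (z10 + z01) - (1 / 2 : ℝ) • (z0m1 + zm10)
        = (1 / 2 : ℝ) • (z01 - z0m1) + (1 / 2 : ℝ) • (z10 - zm10) := by module
    rw [h1, h2]
    simp only [Matrix.sub_mulVec, Matrix.add_mulVec, Matrix.smul_mulVec,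
      Matrix.mulVec_sub, Matrix.mulVec_add, Matrix.mulVec_smul]
    module
  · module
end

section
/- Let n ≥ 1, let K and L be real skew-symmetric n×n matrices, let S : ℝⁿ → ℝ be differentiable with gradient ∇S, let Δx, Δt > 0, and set K̃ = (1/Δt)K − (1/Δx)L, L̃ = (1/Δt)K + (1/Δx)L. Suppose z_t, z_b, z_r, z_ℓ ∈ ℝⁿ satisfy the r = 1 diamond scheme equations K̃(z_t − z_b) + L̃(z_r − z_ℓ) = ∇S((z_t + z_b + z_r + z_ℓ)/4) and z_t − z_r + z_b − z_ℓ = 0. Then for every w ∈ ℝⁿ there exist unique vectors z₋₁⁰, z₁⁰, z₀¹ ∈ ℝⁿ such that z_b = (w + z₁⁰)/2, z_ℓ = (w + z₋₁⁰)/2, z_t = (z₋₁⁰ + z₀¹)/2, z_r = (z₁⁰ + z₀¹)/2, and moreover the corner values (z₀¹, z₁⁰, w, z₋₁⁰) satisfy the simple diamond scheme: K(z₀¹ − w)/Δt + L(z₁⁰ − z₋₁⁰)/Δx = ∇S((z₀¹ + z₁⁰ + w + z₋₁⁰)/4). -/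
open Matrix

/-- Any solution of the `r = 1` diamond scheme corresponds, for each choice of the
bottom corner value `w`, to unique corner values satisfying the averaging relations,
and these corner values solve the simple diamond scheme. -/
theorem r1_to_simple_diamond (n : ℕ) (hn : 1 ≤ n)
    (K L : Matrix (Fin n) (Fin n) ℝ) (hK : Kᵀ = -K) (hL : Lᵀ = -L)
    (S : (Fin n → ℝ) → ℝ) (gradS : (Fin n → ℝ) → (Fin n → ℝ))
    (hS : ∀ y, HasFDerivAt S
      (∑ i, gradS y i • (ContinuousLinearMap.proj i : (Fin n → ℝ) →L[ℝ] ℝ)) y)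
    (Δx Δt : ℝ) (hΔx : 0 < Δx) (hΔt : 0 < Δt)
    (Kt Lt : Matrix (Fin n) (Fin n) ℝ)
    (hKt : Kt = (1 / Δt) • K - (1 / Δx) • L)
    (hLt : Lt = (1 / Δt) • K + (1 / Δx) • L)
    (zt zb zr zl : Fin n → ℝ)
    (hscheme : Kt.mulVec (zt - zb) + Lt.mulVec (zr - zl)
        = gradS ((1 / 4 : ℝ) • (zt + zb + zr + zl)))
    (hclosure : zt - zr + zb - zl = 0) :
    ∀ w : Fin n → ℝ,
      (∃! p : (Fin n → ℝ) × (Fin n → ℝ) × (Fin n → ℝ),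
        zb = (1 / 2 : ℝ) • (w + p.2.1) ∧
        zl = (1 / 2 : ℝ) • (w + p.1) ∧
        zt = (1 / 2 : ℝ) • (p.1 + p.2.2) ∧
        zr = (1 / 2 : ℝ) • (p.2.1 + p.2.2)) ∧
      (∀ zm10 z10 z01 : Fin n → ℝ,
        zb = (1 / 2 : ℝ) • (w + z10) →
        zl = (1 / 2 : ℝ) • (w + zm10) →
        zt = (1 / 2 : ℝ) • (zm10 + z01) →
        zr = (1 / 2 : ℝ) • (z10 + z01) →
        (1 / Δt) • K.mulVec (z01 - w) + (1 / Δx) • L.mulVec (z10 - zm10)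
          = gradS ((1 / 4 : ℝ) • (z01 + z10 + w + zm10))) := by
  intro w
  have hzr : zr = zt + zb - zl := by
    have h := hclosure
    funext i
    have := congrFun h i
    simp [Pi.sub_apply, Pi.add_apply, Pi.zero_apply] at this ⊢
    linarith
  constructor
  · refine ⟨⟨(2:ℝ) • zl - w, (2:ℝ) • zb - w, (2:ℝ) • zt - ((2:ℝ) • zl - w)⟩,
      ⟨by module, by module, by module, ?_⟩, ?_⟩
    · rw [hzr]; module
    · rintro ⟨a, b, c⟩ ⟨h1, h2, h3, h4⟩
      have hb : b = (2:ℝ) • zb - w := by rw [h1]; module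
      have ha : a = (2:ℝ) • zl - w := by rw [h2]; module
      have hc : c = (2:ℝ) • zt - ((2:ℝ) • zl - w) := by rw [h3, ha]; module
      simp [ha, hb, hc, Prod.ext_iff]
  · intro zm10 z10 z01 h1 h2 h3 h4
    have hm : zm10 = (2:ℝ) • zl - w := by rw [h2]; module
    have h10 : z10 = (2:ℝ) • zb - w := by rw [h1]; module
    have h01 : z01 = (2:ℝ) • zt - zm10 := by rw [h3]; module
    have harg : (1 / 4 : ℝ) • (z01 + z10 + w + zm10)
        = (1 / 4 : ℝ) • (zt + zb + zr + zl) := by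
      rw [h01, h10, hm, hzr]; module
    rw [harg, ← hscheme, hKt, hLt, hzr, h01, h10, hm]
    simp only [Matrix.sub_mulVec, Matrix.add_mulVec, Matrix.smul_mulVec,
      Matrix.mulVec_sub, Matrix.mulVec_add, Matrix.mulVec_smul]
    module
end

section
/- Let n ≥ 1, let K and L be real skew-symmetric n×n matrices, and let Δx, Δt > 0. For any vectors u₀¹, u₁⁰, u₀⁻¹, u₋₁⁰, v₀¹, v₁⁰, v₀⁻¹, v₋₁⁰ ∈ ℝⁿ, define edge variations u_t = (u₀¹ + u₋₁⁰)/2, u_r = (u₀¹ + u₁⁰)/2, u_b = (u₁⁰ + u₀⁻¹)/2, u_ℓ = (u₀⁻¹ + u₋₁⁰)/2, and similarly v_t, v_r, v_b, v_ℓ. Then (1/Δt)[⟨u_t, K v_t⟩ + ⟨u_r, K v_r⟩ − ⟨u_ℓ, K v_ℓ⟩ − ⟨u_b, K v_b⟩] + (1/Δx)[⟨u_r, L v_r⟩ + ⟨u_b, L v_b⟩ − ⟨u_t, L v_t⟩ − ⟨u_ℓ, L v_ℓ⟩] = (1/(4Δt))[⟨u₋₁⁰ + u₀¹ + u₁⁰,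 K v₀¹⟩ − ⟨v₋₁⁰ + v₀¹ + v₁⁰, K u₀¹⟩ − ⟨u₋₁⁰ + u₀⁻¹ + u₁⁰, K v₀⁻¹⟩ + ⟨v₋₁⁰ + v₀⁻¹ + v₁⁰, K u₀⁻¹⟩] + (1/(4Δx))[⟨u₀¹ + u₁⁰ + u₀⁻¹, L v₁⁰⟩ − ⟨v₀¹ + v₁⁰ + v₀⁻¹, L u₁⁰⟩ − ⟨u₀¹ + u₋₁⁰ + u₀⁻¹, L v₋₁⁰⟩ + ⟨v₀¹ + v₋₁⁰ + v₀⁻¹, L u₋₁⁰⟩], where ⟨·,·⟩ is the standard inner product on ℝⁿ. Hence the discrete multisymplectic conservation law of the r = 1 diamond scheme is equivalent, under the corner-to-edge averaging relations, to that of the simple diamond scheme. -/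
open Matrix

lemma skew_dot_swap {n : ℕ} {A : Matrix (Fin n) (Fin n) ℝ} (hA : Aᵀ = -A)
    (x y : Fin n → ℝ) : y ⬝ᵥ A.mulVec x = -(x ⬝ᵥ A.mulVec y) := by
  rw [dotProduct_mulVec, ← mulVec_transpose, hA, neg_mulVec, neg_dotProduct,
    dotProduct_comm]

/-- Under the corner-to-edge averaging relations, the discrete multisymplectic
conservation law expression of the `r = 1` diamond scheme equals that of the
simple diamond scheme, for arbitrary variations. -/
theorem r1_simple_conservation_laws_equivalent (n : ℕ) (hn : 1 ≤ n)
    (K L : Matrix (Fin n) (Fin n) ℝ) (hK : Kᵀ = -K) (hL : Lᵀ = -L)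
    (Δx Δt : ℝ) (hΔx : 0 < Δx) (hΔt : 0 < Δt)
    (u01 u10 u0m1 um10 v01 v10 v0m1 vm10 : Fin n → ℝ)
    (uT uR uB uL vT vR vB vL : Fin n → ℝ)
    (huT : uT = (1 / 2 : ℝ) • (u01 + um10)) (huR : uR = (1 / 2 : ℝ) • (u01 + u10))
    (huB : uB = (1 / 2 : ℝ) • (u10 + u0m1)) (huL : uL = (1 / 2 : ℝ) • (u0m1 + um10))
    (hvT : vT = (1 / 2 : ℝ) • (v01 + vm10)) (hvR : vR = (1 / 2 : ℝ) • (v01 + v10))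
    (hvB : vB = (1 / 2 : ℝ) • (v10 + v0m1)) (hvL : vL = (1 / 2 : ℝ) • (v0m1 + vm10)) :
    (1 / Δt) * (uT ⬝ᵥ K.mulVec vT + uR ⬝ᵥ K.mulVec vR
        - uL ⬝ᵥ K.mulVec vL - uB ⬝ᵥ K.mulVec vB)
      + (1 / Δx) * (uR ⬝ᵥ L.mulVec vR + uB ⬝ᵥ L.mulVec vB
        - uT ⬝ᵥ L.mulVec vT - uL ⬝ᵥ L.mulVec vL)
    = (1 / (4 * Δt)) *
        ((um10 + u01 + u10) ⬝ᵥ K.mulVec v01 - (vm10 + v01 + v10) ⬝ᵥ K.mulVec u01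
          - (um10 + u0m1 + u10) ⬝ᵥ K.mulVec v0m1 + (vm10 + v0m1 + v10) ⬝ᵥ K.mulVec u0m1)
      + (1 / (4 * Δx)) *
        ((u01 + u10 + u0m1) ⬝ᵥ L.mulVec v10 - (v01 + v10 + v0m1) ⬝ᵥ L.mulVec u10
          - (u01 + um10 + u0m1) ⬝ᵥ L.mulVec vm10 + (v01 + vm10 + v0m1) ⬝ᵥ L.mulVec um10) := by
  subst huT huR huB huL hvT hvR hvB hvL
  simp only [add_dotProduct, dotProduct_add, mulVec_add, mulVec_smul,
    smul_dotProduct, dotProduct_smul, smul_eq_mul,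
    skew_dot_swap hK v01 u01, skew_dot_swap hK v10 u01, skew_dot_swap hK vm10 u01,
    skew_dot_swap hK v01 u0m1, skew_dot_swap hK v0m1 u0m1, skew_dot_swap hK v10 u0m1, skew_dot_swap hK vm10 u0m1,
    skew_dot_swap hL v01 u10, skew_dot_swap hL v10 u10, skew_dot_swap hL v0m1 u10,
    skew_dot_swap hL v01 um10, skew_dot_swap hL vm10 um10, skew_dot_swap hL v0m1 um10]
  ring
end

section
/- Let n ≥ 1, let K and L be real skew-symmetric n×n matrices, let S : ℝⁿ → ℝ be twice continuously differentiable with gradient ∇S, and let z : ℝ² → ℝⁿ be three times continuously differentiable and satisfy K z_t + L z_x = ∇S(z) at every point. Fix (x₀, t₀) ∈ ℝ². Then the local truncation residual of the simple diamond scheme, R(Δx, Δt) = K (z(x₀, t₀ + Δt/2) − z(x₀, t₀ − Δt/2))/Δt + L (z(x₀ + Δx/2, t₀) − z(x₀ − Δx/2, t₀))/Δx − ∇S( (z(x₀, t₀ + Δt/2) + z(x₀ + Δx/2, t₀) + z(x₀, t₀ − Δt/2) + z(x₀ − Δx/2, t₀))/4 ), satisfies ‖R(Δx, Δt)‖ =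 O(Δx² + Δt²) as (Δx, Δt) → (0, 0); that is, the simple diamond scheme has local truncation error of second order in space and time. -/
/-!
Expand around the centre of the diamond. By Taylor's theorem the two symmetric difference
quotients approximate `z_t` and `z_x` up to `O(Δt²)` and `O(Δx²)`, and the four-point average
approximates `z(x₀, t₀)` up to `O(Δx² + Δt²)`; as `∇S` is differentiable, `∇S` of the average is
then `∇S(z(x₀, t₀)) + O(Δx² + Δt²)`, and the PDE at `(x₀, t₀)` cancels the leading terms. The
one-dimensional Taylor bounds come from the mean value inequality: a derivative that is `O(hⁿ)`
integrates to a function that is `O(hⁿ⁺¹)`.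
-/

open Matrix Topology Asymptotics Filter Set

section Taylor

variable {E : Type*} [NormedAddCommGroup E] [NormedSpace ℝ E]

theorem isBigO_pow_succ_of_hasDerivAt {g g' : ℝ → E} {n : ℕ}
    (hg : ∀ h, HasDerivAt g (g' h) h) (hg0 : g 0 = 0) (hg' : g' =O[𝓝 0] (· ^ n)) :
    g =O[𝓝 0] (· ^ (n + 1)) := by
  obtain ⟨C, hC, hbound⟩ := hg'.exists_nonneg
  obtain ⟨ε, hε, hball⟩ := Metric.eventually_nhds_iff_ball.1 hbound.bound
  refine IsBigO.of_bound C (Metric.eventually_nhds_iff_ball.2 ⟨ε, hε, fun h hh => ?_⟩)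
  have hderiv_le : ∀ s ∈ Metric.closedBall (0 : ℝ) |h|, ‖g' s‖ ≤ C * |h| ^ n := by
    intro s hs
    have hs' : |s| ≤ |h| := by simpa using hs
    calc ‖g' s‖ ≤ C * ‖s ^ n‖ :=
          hball s (Metric.closedBall_subset_ball (by simpa using hh) hs)
      _ ≤ C * |h| ^ n := by rw [norm_pow, Real.norm_eq_abs]; gcongr
  have hmvt : ‖g h - g 0‖ ≤ C * |h| ^ n * ‖h - 0‖ :=
    (convex_closedBall (0 : ℝ) |h|).norm_image_sub_le_of_norm_hasDerivWithin_le
      (fun s _ => (hg s).hasDerivWithinAt) hderiv_le (by simp) (by simp)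
  simpa [hg0, pow_succ, mul_assoc] using hmvt

theorem isBigO_pow_comp_div {F : Type*} [Norm F] {f : ℝ → F} {n : ℕ} (hf : f =O[𝓝 0] (· ^ n))
    (c : ℝ) :
    (fun h => f (h / c)) =O[𝓝 0] (· ^ n) := by
  have hdiv : Tendsto (· / c) (𝓝 (0 : ℝ)) (𝓝 0) := by
    simpa using (continuous_id.div_const c).tendsto 0
  refine (hf.comp_tendsto hdiv).trans ?_
  simp only [Function.comp_def, div_pow]
  simp only [div_eq_inv_mul]
  exact isBigO_const_mul_self _ _ _

theorem ContDiff.isBigO_second_difference {ψ : ℝ → E} (hψ : ContDiff ℝ 2 ψ) (t : ℝ) :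
    (fun h => ψ (t + h) + ψ (t - h) - (2 : ℝ) • ψ t) =O[𝓝 0] (· ^ 2) := by
  obtain ⟨hψd, -, hψ'⟩ := (contDiff_succ_iff_deriv (n := 1)).1 hψ
  have hderiv : ∀ h, HasDerivAt (fun h => ψ (t + h) + ψ (t - h) - (2 : ℝ) • ψ t)
      ((deriv ψ (t + h) - deriv ψ t) - (deriv ψ (t - h) - deriv ψ t)) h := fun h => by
    have hp := (hψd (t + h)).hasDerivAt.scomp h ((hasDerivAt_id' h).const_add t)
    have hm := (hψd (t - h)).hasDerivAt.scomp h ((hasDerivAt_id' h).const_sub t)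
    exact ((hp.add hm).sub_const _).congr_deriv (by module)
  have hψ'_sub := (hψ'.differentiable one_ne_zero t).isBigO_sub
  have hplus : (fun h : ℝ => deriv ψ (t + h) - deriv ψ t) =O[𝓝 0] (· ^ 1) := by
    simpa [Function.comp_def] using
      hψ'_sub.comp_tendsto ((continuous_const_add t).tendsto' 0 t (by simp))
  have hminus : (fun h : ℝ => deriv ψ (t - h) - deriv ψ t) =O[𝓝 0] (· ^ 1) := by
    refine isBigO_neg_right.1 ?_
    simpa [Function.comp_def] using
      hψ'_sub.comp_tendsto ((continuous_sub_left t).tendsto' 0 t (by simp))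
  exact isBigO_pow_succ_of_hasDerivAt hderiv (by simp [two_smul]) (hplus.sub hminus)

theorem ContDiff.isBigO_central_difference {φ : ℝ → E} (hφ : ContDiff ℝ 3 φ) (t : ℝ) :
    (fun h => φ (t + h) - φ (t - h) - (2 * h) • deriv φ t) =O[𝓝 0] (· ^ 3) := by
  obtain ⟨hφd, -, hφ'⟩ := (contDiff_succ_iff_deriv (n := 2)).1 hφ
  have hderiv : ∀ h, HasDerivAt (fun h => φ (t + h) - φ (t - h) - (2 * h) • deriv φ t)
      (deriv φ (t + h) + deriv φ (t - h) - (2 : ℝ) • deriv φ t) h := fun h => by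
    have hp := (hφd (t + h)).hasDerivAt.scomp h ((hasDerivAt_id' h).const_add t)
    have hm := (hφd (t - h)).hasDerivAt.scomp h ((hasDerivAt_id' h).const_sub t)
    have hl := ((hasDerivAt_id' h).const_mul 2).smul_const (deriv φ t)
    exact ((hp.sub hm).sub hl).congr_deriv (by module)
  exact isBigO_pow_succ_of_hasDerivAt hderiv (by simp) (hφ'.isBigO_second_difference t)

theorem ContDiff.isBigO_difference_quotient_sub_deriv {φ : ℝ → E} (hφ : ContDiff ℝ 3 φ) (t : ℝ) :
    (fun h : ℝ => h⁻¹ • (φ (t + h / 2) - φ (t - h / 2)) - deriv φ t) =O[𝓝[≠] 0] (· ^ 2) := by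
  -- `𝓝[≠] 0` because the junk value `0⁻¹ = 0` leaves `-deriv φ t` at `h = 0`
  have hhalf := isBigO_pow_comp_div (hφ.isBigO_central_difference t) 2
  have hquot :=
    ((isBigO_refl (fun h : ℝ => h⁻¹) _).smul hhalf).mono (nhdsWithin_le_nhds (s := {0}ᶜ))
  refine hquot.congr' ?_ ?_ <;> filter_upwards [self_mem_nhdsWithin] with h (hh : h ≠ 0)
  · rw [smul_sub, smul_smul, mul_div_cancel₀ _ two_ne_zero, inv_mul_cancel₀ hh, one_smul]
  · simp only [smul_eq_mul]
    field_simp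

end Taylor

namespace Asymptotics

variable {E : Type*} [Norm E]

theorem IsBigO.comp_fst_quadrant {f : ℝ → E} (hf : f =O[𝓝[≠] 0] (· ^ 2)) :
    (fun p : ℝ × ℝ => f p.1) =O[𝓝[Ioi 0 ×ˢ Ioi 0] (0, 0)] fun p => p.1 ^ 2 + p.2 ^ 2 := by
  have hfst : Tendsto Prod.fst (𝓝[Ioi 0 ×ˢ Ioi 0] ((0 : ℝ), (0 : ℝ))) (𝓝[≠] 0) :=
    tendsto_nhdsWithin_iff.2 ⟨(continuous_fst.tendsto _).mono_left nhdsWithin_le_nhds,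
      eventually_nhdsWithin_of_forall fun p hp => hp.1.ne'⟩
  refine (hf.comp_tendsto hfst).trans (isBigO_of_le _ fun p => ?_)
  rw [Function.comp_apply, Real.norm_of_nonneg (by positivity),
    Real.norm_of_nonneg (by positivity)]
  linarith [sq_nonneg p.2]

theorem IsBigO.comp_snd_quadrant {f : ℝ → E} (hf : f =O[𝓝[≠] 0] (· ^ 2)) :
    (fun p : ℝ × ℝ => f p.2) =O[𝓝[Ioi 0 ×ˢ Ioi 0] (0, 0)] fun p => p.1 ^ 2 + p.2 ^ 2 := by
  have hsnd : Tendsto Prod.snd (𝓝[Ioi 0 ×ˢ Ioi 0] ((0 : ℝ), (0 : ℝ))) (𝓝[≠] 0) :=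
    tendsto_nhdsWithin_iff.2 ⟨(continuous_snd.tendsto _).mono_left nhdsWithin_le_nhds,
      eventually_nhdsWithin_of_forall fun p hp => hp.2.ne'⟩
  refine (hf.comp_tendsto hsnd).trans (isBigO_of_le _ fun p => ?_)
  rw [Function.comp_apply, Real.norm_of_nonneg (by positivity),
    Real.norm_of_nonneg (by positivity)]
  linarith [sq_nonneg p.1]

end Asymptotics

theorem DifferentiableAt.isBigO_comp_sub {𝕜 F G α : Type*} [NontriviallyNormedField 𝕜]
    [NormedAddCommGroup F] [NormedSpace 𝕜 F] [NormedAddCommGroup G] [NormedSpace 𝕜 G]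
    {g : F → G} {y : F} (hg : DifferentiableAt 𝕜 g y) {l : Filter α} {u : α → F} {r : α → ℝ}
    (hu : (fun a => u a - y) =O[l] r) (hr : Tendsto r l (𝓝 0)) :
    (fun a => g (u a) - g y) =O[l] r := by
  have hu_tend : Tendsto u l (𝓝 y) := by
    simpa using (hu.trans_tendsto hr).add_const y
  exact (hg.isBigO_sub.comp_tendsto hu_tend).trans hu

theorem Matrix.isBigO_mulVec_comp {𝕜 m n α : Type*} [NontriviallyNormedField 𝕜]
    [CompleteSpace 𝕜] [Fintype m] [Fintype n] (A : Matrix m n 𝕜) (f : α → n → 𝕜) (l : Filter α) :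
    (fun a => A *ᵥ f a) =O[l] f :=
  (LinearMap.toContinuousLinearMap A.mulVecLin).isBigO_comp f l

theorem differentiable_of_hasFDerivAt_sum_smul_proj {ι : Type*} [Fintype ι]
    {S : (ι → ℝ) → ℝ} {g : (ι → ℝ) → ι → ℝ} (hS : ContDiff ℝ 2 S)
    (hg : ∀ y, HasFDerivAt S
      (∑ i, g y i • (ContinuousLinearMap.proj i : (ι → ℝ) →L[ℝ] ℝ)) y) :
    Differentiable ℝ g := by
  classical
  have hg_eq : g = fun y j => fderiv ℝ S y (Pi.single j 1) := by
    funext y j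
    simp [(hg y).fderiv, Pi.single_apply]
  have hS' : Differentiable ℝ (fderiv ℝ S) :=
    (hS.fderiv_right (m := 1) (by norm_num)).differentiable one_ne_zero
  rw [hg_eq]
  exact differentiable_pi.2 fun j => hS'.clm_apply (differentiable_const _)

theorem simple_diamond_truncation_error_general (n : ℕ)
    (K L : Matrix (Fin n) (Fin n) ℝ)
    (S : (Fin n → ℝ) → ℝ) (gradS : (Fin n → ℝ) → (Fin n → ℝ))
    (hS2 : ContDiff ℝ 2 S)
    (hgrad : ∀ y, HasFDerivAt S
      (∑ i, gradS y i • (ContinuousLinearMap.proj i : (Fin n → ℝ) →L[ℝ] ℝ)) y)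
    (z : ℝ × ℝ → (Fin n → ℝ)) (hz : ContDiff ℝ 3 z)
    (hpde : ∀ x t : ℝ,
      K.mulVec (deriv (fun s : ℝ => z (x, s)) t)
        + L.mulVec (deriv (fun s : ℝ => z (s, t)) x) = gradS (z (x, t)))
    (x₀ t₀ : ℝ) :
    (fun p : ℝ × ℝ =>
        (1 / p.2) • K.mulVec (z (x₀, t₀ + p.2 / 2) - z (x₀, t₀ - p.2 / 2))
        + (1 / p.1) • L.mulVec (z (x₀ + p.1 / 2, t₀) - z (x₀ - p.1 / 2, t₀))
        - gradS ((1 / 4 : ℝ) • (z (x₀, t₀ + p.2 / 2) + z (x₀ + p.1 / 2, t₀)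
            + z (x₀, t₀ - p.2 / 2) + z (x₀ - p.1 / 2, t₀))))
      =O[𝓝[Set.Ioi (0 : ℝ) ×ˢ Set.Ioi (0 : ℝ)] ((0 : ℝ), (0 : ℝ))]
      (fun p : ℝ × ℝ => p.1 ^ 2 + p.2 ^ 2) := by
  have hzt : ContDiff ℝ 3 fun s => z (x₀, s) := hz.comp (contDiff_const.prodMk contDiff_id)
  have hzx : ContDiff ℝ 3 fun s => z (s, t₀) := hz.comp (contDiff_id.prodMk contDiff_const)
  have hKt := (K.isBigO_mulVec_comp _ _).trans
    (hzt.isBigO_difference_quotient_sub_deriv t₀).comp_snd_quadrant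
  have hLx := (L.isBigO_mulVec_comp _ _).trans
    (hzx.isBigO_difference_quotient_sub_deriv x₀).comp_fst_quadrant
  have hmean : (fun p : ℝ × ℝ => (1 / 4 : ℝ) • (z (x₀, t₀ + p.2 / 2) + z (x₀ + p.1 / 2, t₀)
      + z (x₀, t₀ - p.2 / 2) + z (x₀ - p.1 / 2, t₀)) - z (x₀, t₀))
      =O[𝓝[Ioi 0 ×ˢ Ioi 0] (0, 0)] fun p => p.1 ^ 2 + p.2 ^ 2 := by
    have ht := ((isBigO_pow_comp_div ((hzt.of_le (by norm_num)).isBigO_second_difference t₀)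
      2).mono nhdsWithin_le_nhds).comp_snd_quadrant
    have hx := ((isBigO_pow_comp_div ((hzx.of_le (by norm_num)).isBigO_second_difference x₀)
      2).mono nhdsWithin_le_nhds).comp_fst_quadrant
    refine ((ht.add hx).const_smul_left (1 / 4 : ℝ)).congr_left fun p => ?_
    rw [Pi.smul_apply]
    module
  have hrate :
      Tendsto (fun p : ℝ × ℝ => p.1 ^ 2 + p.2 ^ 2) (𝓝[Ioi 0 ×ˢ Ioi 0] (0, 0)) (𝓝 0) :=
    (((continuous_fst.pow 2).add (continuous_snd.pow 2)).tendsto' _ _ (by simp)).mono_left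
      nhdsWithin_le_nhds
  have hgradS :=
    (differentiable_of_hasFDerivAt_sum_smul_proj hS2 hgrad (z (x₀, t₀))).isBigO_comp_sub hmean hrate
  refine ((hKt.add hLx).sub hgradS).congr_left fun p => ?_
  simp only [one_div, mulVec_sub, mulVec_smul, ← hpde x₀ t₀]
  abel

/-- The simple diamond scheme has local truncation error of second order in space
and time: substituting a smooth exact solution of `K z_t + L z_x = ∇S(z)` into the
scheme leaves a residual of size `O(Δx² + Δt²)` as `(Δx, Δt) → (0⁺, 0⁺)`. -/
theorem simple_diamond_truncation_error (n : ℕ) (hn : 1 ≤ n)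
    (K L : Matrix (Fin n) (Fin n) ℝ) (hK : Kᵀ = -K) (hL : Lᵀ = -L)
    (S : (Fin n → ℝ) → ℝ) (gradS : (Fin n → ℝ) → (Fin n → ℝ))
    (hS2 : ContDiff ℝ 2 S)
    (hgrad : ∀ y, HasFDerivAt S
      (∑ i, gradS y i • (ContinuousLinearMap.proj i : (Fin n → ℝ) →L[ℝ] ℝ)) y)
    (z : ℝ × ℝ → (Fin n → ℝ)) (hz : ContDiff ℝ 3 z)
    (hpde : ∀ x t : ℝ,
      K.mulVec (deriv (fun s : ℝ => z (x, s)) t)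
        + L.mulVec (deriv (fun s : ℝ => z (s, t)) x) = gradS (z (x, t)))
    (x₀ t₀ : ℝ) :
    (fun p : ℝ × ℝ =>
        (1 / p.2) • K.mulVec (z (x₀, t₀ + p.2 / 2) - z (x₀, t₀ - p.2 / 2))
        + (1 / p.1) • L.mulVec (z (x₀ + p.1 / 2, t₀) - z (x₀ - p.1 / 2, t₀))
        - gradS ((1 / 4 : ℝ) • (z (x₀, t₀ + p.2 / 2) + z (x₀ + p.1 / 2, t₀)
            + z (x₀, t₀ - p.2 / 2) + z (x₀ - p.1 / 2, t₀))))
      =O[𝓝[Set.Ioi (0 : ℝ) ×ˢ Set.Ioi (0 : ℝ)] ((0 : ℝ), (0 : ℝ))]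
      (fun p : ℝ × ℝ => p.1 ^ 2 + p.2 ^ 2) :=
  simple_diamond_truncation_error_general n K L S gradS hS2 hgrad z hz hpde x₀ t₀
end
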